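/- arXiv:2008.13243 — 8 statements merged into one kernel-verified Lean document; each statement's English description precedes it below -/
import Mathlib

section
/- For a finite poset (P,<), the integer points of the order polytope O(P,<) are exactly the indicator functions of order ideals of (P,<), and each such integer point is a vertex of O(P,<). -/
/-!
An integer point of `O(P,<)` is `0/1`-valued, hence the indicator of its support, and the
inequalities `x_q ≤ x_p` for `q > p` say exactly that this support is an order ideal.
Every `0/1` point is a vertex of the unit cube `[0,1]^P`, whose extreme points are the
products of the extreme points `{0, 1}` of `[0,1]`; since `O(P,<)` lies inside the cube,
such a point is also a vertex of `O(P,<)`.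
-/

/-- The order polytope of a (strict) order relation `lt` on a finite set `P`. -/
def orderPolytope {P : Type*} [Fintype P] (lt : P → P → Prop) : Set (P → ℝ) :=
  {x | (∀ p, 0 ≤ x p ∧ x p ≤ 1) ∧ ∀ p q, lt p q → x q ≤ x p}

/-- `J` is an order ideal (lower set) for the strict order `lt`. -/
def isOrderIdeal {P : Type*} (lt : P → P → Prop) (J : Set P) : Prop :=
  ∀ ⦃p q : P⦄, p ∈ J → lt q p → q ∈ J

open Set

section

variable {P : Type*}

lemma orderPolytope_subset_pi_Icc [Fintype P] (lt : P → P → Prop) :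
    orderPolytope lt ⊆ univ.pi fun _ => Icc (0 : ℝ) 1 :=
  fun _ hx p _ => hx.1 p

lemma indicator_one_mem_orderPolytope_iff [Fintype P] (lt : P → P → Prop) (J : Set P) :
    J.indicator (fun _ => (1 : ℝ)) ∈ orderPolytope lt ↔ isOrderIdeal lt J := by
  refine ⟨fun hJ p q hp hqp => ?_, fun hJ => ⟨fun p => ?_, fun q p hqp => ?_⟩⟩
  · by_contra hq
    have := hJ.2 q p hqp
    rw [indicator_of_mem hp, indicator_of_notMem hq] at this
    linarith
  · by_cases hp : p ∈ J <;> simp [hp]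
  · by_cases hp : p ∈ J
    · simp [hp, hJ hp hqp]
    · by_cases hq : q ∈ J <;> simp [hp, hq]

lemma eq_zero_or_eq_one_of_mem_Icc_of_eq_intCast {t : ℝ} (ht : t ∈ Icc 0 1) {m : ℤ}
    (hm : t = m) : t = 0 ∨ t = 1 := by
  subst hm
  have : m = 0 ∨ m = 1 := by
    have h0 : (0 : ℤ) ≤ m := by exact_mod_cast ht.1
    have h1 : m ≤ 1 := by exact_mod_cast ht.2
    omega
  rcases this with rfl | rfl <;> simp

lemma forall_exists_intCast_iff_exists_eq_indicator_one {x : P → ℝ}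
    (hx : ∀ p, x p ∈ Icc 0 1) :
    (∀ p, ∃ m : ℤ, x p = m) ↔ ∃ J : Set P, x = J.indicator (fun _ => 1) := by
  constructor
  · intro hint
    refine ⟨{p | x p = 1}, funext fun p => ?_⟩
    obtain ⟨m, hm⟩ := hint p
    rcases eq_zero_or_eq_one_of_mem_Icc_of_eq_intCast (hx p) hm with h | h <;> simp [h]
  · rintro ⟨J, rfl⟩ p
    by_cases hp : p ∈ J
    · exact ⟨1, by simp [hp]⟩
    · exact ⟨0, by simp [hp]⟩

lemma indicator_one_mem_extremePoints_pi_Icc (J : Set P) :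
    J.indicator (fun _ => (1 : ℝ)) ∈ (univ.pi fun _ : P => Icc (0 : ℝ) 1).extremePoints ℝ := by
  rw [extremePoints_pi]
  intro p _
  rw [extremePoints_Icc zero_le_one]
  by_cases hp : p ∈ J <;> simp [hp]

end

theorem stmt8_general {P : Type*} [Fintype P] (lt : P → P → Prop) :
    (∀ x : P → ℝ, (x ∈ orderPolytope lt ∧ ∀ p, ∃ m : ℤ, x p = m) ↔
      ∃ J : Set P, isOrderIdeal lt J ∧ x = J.indicator (fun _ => (1 : ℝ))) ∧
    ∀ x : P → ℝ, (x ∈ orderPolytope lt ∧ ∀ p, ∃ m : ℤ, x p = m) →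
      x ∈ Set.extremePoints ℝ (orderPolytope lt) := by
  have integer_points : ∀ x : P → ℝ, (x ∈ orderPolytope lt ∧ ∀ p, ∃ m : ℤ, x p = m) ↔
      ∃ J : Set P, isOrderIdeal lt J ∧ x = J.indicator (fun _ => (1 : ℝ)) := by
    intro x
    constructor
    · rintro ⟨hx, hint⟩
      obtain ⟨J, rfl⟩ := (forall_exists_intCast_iff_exists_eq_indicator_one hx.1).1 hint
      exact ⟨J, (indicator_one_mem_orderPolytope_iff lt J).1 hx, rfl⟩
    · rintro ⟨J, hJ, rfl⟩
      have hx := (indicator_one_mem_orderPolytope_iff lt J).2 hJ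
      exact ⟨hx, (forall_exists_intCast_iff_exists_eq_indicator_one hx.1).2 ⟨J, rfl⟩⟩
  refine ⟨integer_points, fun x hx => ?_⟩
  obtain ⟨J, -, rfl⟩ := (integer_points x).1 hx
  exact inter_extremePoints_subset_extremePoints_of_subset (orderPolytope_subset_pi_Icc lt)
    ⟨hx.1, indicator_one_mem_extremePoints_pi_Icc J⟩

/-- The integer points of the order polytope `O(P,<)` are exactly the indicator
functions of order ideals of `(P,<)`, and each such point is a vertex (extreme point)
of `O(P,<)`. -/
theorem stmt8 {P : Type*} [Fintype P] (lt : P → P → Prop) (h : IsStrictOrder P lt) :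
    (∀ x : P → ℝ, (x ∈ orderPolytope lt ∧ ∀ p, ∃ m : ℤ, x p = m) ↔
      ∃ J : Set P, isOrderIdeal lt J ∧ x = J.indicator (fun _ => (1 : ℝ))) ∧
    ∀ x : P → ℝ, (x ∈ orderPolytope lt ∧ ∀ p, ∃ m : ℤ, x p = m) →
      x ∈ Set.extremePoints ℝ (orderPolytope lt) :=
  stmt8_general lt
end

section
/- For a finite poset (P,<), the simplices O(P,≺), as ≺ ranges over all linearizations of <, cover the order polytope O(P,<), and the interiors of distinct simplices O(P,≺), O(P,≺') are disjoint. -/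
/-!
A point `x` of `O(P,<)` lies in `O(P,≺)` for the linearization `≺` that sorts `P` by decreasing
value of `x`, ties being broken by a fixed linear extension of `<`; this is the pullback of the
lexicographic order along `p ↦ (x p, p)`. Conversely, if `x` is interior to `O(P,≺)` then raising
any coordinate slightly stays in `O(P,≺)`, which forces `x q < x p` whenever `p ≺ q`; so the order
of the coordinates of `x` recovers `≺`, and two linearizations whose interiors meet coincide.
-/

open Function Set Topology OrderDual

section Linearization

variable {P β : Type*}

lemma isStrictTotalOrder_of_injective [LinearOrder β] {f : P → β} (hf : Injective f) :
    IsStrictTotalOrder P (fun p q => f p < f q) where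
  trichotomous _ _ hpq hqp := hf ((not_lt.1 hqp).antisymm (not_lt.1 hpq))
  irrefl p := lt_irrefl (f p)
  trans _ _ _ := lt_trans

theorem exists_isStrictTotalOrder_le (lt : P → P → Prop) [IsStrictOrder P lt] :
    ∃ s : P → P → Prop, IsStrictTotalOrder P s ∧ lt ≤ s := by
  let := partialOrderOfSO lt
  refine ⟨fun p q => toLinearExtension p < toLinearExtension q,
    isStrictTotalOrder_of_injective fun _ _ h => h, fun p q hpq => ?_⟩
  have hpq : p < q := hpq
  exact (toLinearExtension.monotone hpq.le).lt_of_ne hpq.ne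

end Linearization

lemma exists_update_gt_mem_of_mem_interior {ι : Type*} [DecidableEq ι] {S : Set (ι → ℝ)}
    {x : ι → ℝ} (hx : x ∈ interior S) (i : ι) : ∃ t > x i, update x i t ∈ S := by
  have hcont : Continuous (update x i ·) := continuous_const.update i continuous_id
  have hS : (update x i ·) ⁻¹' S ∈ 𝓝 (x i) :=
    hcont.continuousAt.preimage_mem_nhds <| by
      rw [update_eq_self]
      exact mem_interior_iff_mem_nhds.1 hx
  exact ((eventually_mem_nhdsWithin (s := Ioi (x i))).and (mem_nhdsWithin_of_mem_nhds hS)).exists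

section OrderPolytope

variable {P : Type*} [Fintype P]

lemma orderPolytope_anti {s s' : P → P → Prop} (h : s ≤ s') :
    orderPolytope s' ⊆ orderPolytope s :=
  fun _ hx => ⟨hx.1, fun p q hpq => hx.2 p q (h p q hpq)⟩

theorem exists_linearization_mem_orderPolytope {lt : P → P → Prop} [IsStrictOrder P lt]
    {x : P → ℝ} (hx : x ∈ orderPolytope lt) :
    ∃ s : P → P → Prop, (IsStrictTotalOrder P s ∧ lt ≤ s) ∧ x ∈ orderPolytope s := by
  obtain ⟨t, ht, hlt⟩ := exists_isStrictTotalOrder_le lt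
  classical
  let := linearOrderOfSTO t
  let f : P → ℝᵒᵈ ×ₗ P := fun p => toLex (toDual (x p), p)
  have hf : Injective f := fun p q h => congrArg (fun y => (ofLex y).2) h
  refine ⟨fun p q => f p < f q, ⟨isStrictTotalOrder_of_injective hf, fun p q hpq => ?_⟩,
    hx.1, fun p q hpq => Prod.Lex.monotone_fst _ _ hpq.le⟩
  exact Prod.Lex.toLex_lt_toLex.2
    ((hx.2 p q hpq).lt_or_eq.imp id fun h => ⟨h.symm, hlt p q hpq⟩)

lemma lt_of_mem_interior_orderPolytope {s : P → P → Prop} {x : P → ℝ}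
    (hx : x ∈ interior (orderPolytope s)) {p q : P} (hpq : p ≠ q) (h : s p q) : x q < x p := by
  classical
  obtain ⟨t, hqt, ht⟩ := exists_update_gt_mem_of_mem_interior hx q
  have htp := ht.2 p q h
  rw [update_self, update_of_ne hpq] at htp
  exact hqt.trans_le htp

lemma le_of_mem_interior_orderPolytope {s s' : P → P → Prop} [Std.Irrefl s]
    [Std.Trichotomous s'] {x : P → ℝ} (hx : x ∈ interior (orderPolytope s))
    (hx' : x ∈ interior (orderPolytope s')) : s ≤ s' := by
  intro p q h
  have hpq := ne_of_irrefl h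
  rcases trichotomous_of s' p q with h' | rfl | h'
  · exact h'
  · exact absurd rfl hpq
  · exact absurd (lt_of_mem_interior_orderPolytope hx hpq h)
      (lt_of_mem_interior_orderPolytope hx' hpq.symm h').asymm

end OrderPolytope

/-- The simplices `O(P,≺)`, as `≺` ranges over all linearizations of `<`, cover the
order polytope `O(P,<)`, and the interiors of distinct such simplices are disjoint. -/
theorem stmt10 {P : Type*} [Fintype P] (lt : P → P → Prop) (h : IsStrictOrder P lt) :
    (orderPolytope lt = ⋃ slt ∈ {s : P → P → Prop |
        IsStrictTotalOrder P s ∧ ∀ p q, lt p q → s p q}, orderPolytope slt) ∧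
    ∀ s s' : P → P → Prop,
      (IsStrictTotalOrder P s ∧ ∀ p q, lt p q → s p q) →
      (IsStrictTotalOrder P s' ∧ ∀ p q, lt p q → s' p q) → s ≠ s' →
      interior (orderPolytope s) ∩ interior (orderPolytope s') = ∅ := by
  refine ⟨Subset.antisymm (fun x hx => ?_) (iUnion₂_subset fun s hs => orderPolytope_anti hs.2),
    ?_⟩
  · obtain ⟨s, hs, hxs⟩ := exists_linearization_mem_orderPolytope hx
    exact mem_iUnion₂.2 ⟨s, hs, hxs⟩
  · rintro s s' ⟨hs, -⟩ ⟨hs', -⟩ hne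
    exact eq_empty_iff_forall_notMem.2 fun x ⟨hx, hx'⟩ => hne <|
      le_antisymm (le_of_mem_interior_orderPolytope hx hx')
        (le_of_mem_interior_orderPolytope hx' hx)
end

section
/- Let L be a finite distributive lattice with join-irreducible poset P, and let ≺, ≺' be two linearizations of the order on P. Then the corresponding maximal chains C_≺ and C_{≺'} in L have symmetric difference {a,b} of size two if and only if the sequences (p_1,...,p_{|P|}) and (p'_1,...,p'_{|P|}) determined by ≺ and ≺' differ by exchanging two consecutive elements; in that case {a,b} is a diamond pair, i.e., a ∨ b covers both a and b and both a and b cover a ∧ b. -/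
/-!
By Birkhoff's theorem `bIdealSet` is a bijection from `L` onto the lower sets of
join-irreducibles, and it carries `C_≺` onto the initial segments `{e 0, …, e (i - 1)}` of the
enumeration `e` (a set closed downwards under `≺` is an initial segment). Initial segments of
`e` and `e'` of different sizes never coincide, so `C_≺ ∆ C_≺'` has twice as many elements as
there are lengths `i` at which the segments of `e` and `e'` differ. This happens at exactly one
length `i + 1` iff `e'` is `e` with positions `i` and `i + 1` exchanged, and then the two
segments of length `i + 1` are `S ∪ {p}` and `S ∪ {q}`: a diamond of sets, hence of `L`.
-/

/-- The poset of join-irreducible elements of `L`. -/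
abbrev JI (L : Type*) [Lattice L] := {p : L // SupIrred p}

/-- The Birkhoff order ideal of `a`, as a set of join-irreducibles. -/
def bIdealSet {L : Type*} [Lattice L] (a : L) : Set (JI L) := {p | (p : L) ≤ a}

/-- The maximal chain `C_≺ ⊆ L` associated with a linearization `slt`. -/
def chainOf {L : Type*} [Lattice L] (slt : JI L → JI L → Prop) : Set L :=
  {a | ∀ ⦃p q : JI L⦄, p ∈ bIdealSet a → slt q p → q ∈ bIdealSet a}

open Set

section InitialSegments

variable {α : Type*} {n : ℕ} (e e' : Fin n ≃ α)

def initSeg (i : ℕ) : Set α := {p | (e.symm p : ℕ) < i}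

def initSegs : Set (Set α) := initSeg e '' Iic n

def segDisagreement : Set ℕ := {i | i ≤ n ∧ initSeg e i ≠ initSeg e' i}

def IsAdjacentSwap : Prop :=
  ∃ i : Fin n, ∃ hi : (i : ℕ) + 1 < n,
    e' i = e ⟨(i : ℕ) + 1, hi⟩ ∧ e' ⟨(i : ℕ) + 1, hi⟩ = e i ∧
    ∀ j, j ≠ i → j ≠ ⟨(i : ℕ) + 1, hi⟩ → e' j = e j

@[simp]
lemma apply_mem_initSeg {j : Fin n} {i : ℕ} : e j ∈ initSeg e i ↔ (j : ℕ) < i := by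
  simp [initSeg]

lemma initSeg_zero : initSeg e 0 = ∅ := by
  simp [initSeg]

lemma initSeg_of_le {i : ℕ} (h : n ≤ i) : initSeg e i = univ :=
  eq_univ_of_forall fun p => lt_of_lt_of_le (e.symm p).2 h

lemma initSeg_succ (j : Fin n) : initSeg e (j + 1) = insert (e j) (initSeg e j) := by
  ext p
  obtain ⟨k, rfl⟩ := e.surjective p
  simp [le_iff_eq_or_lt, Fin.val_inj]

lemma ncard_initSeg {i : ℕ} (h : i ≤ n) : (initSeg e i).ncard = i := by
  have := Finite.of_equiv _ e
  induction i with
  | zero => simp [initSeg_zero]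
  | succ i ih =>
    rw [initSeg_succ e ⟨i, h⟩, ncard_insert_of_notMem (by simp), ih (by omega)]

variable {e e'}

lemma eq_of_initSeg_eq {i j : ℕ} (hi : i ≤ n) (hj : j ≤ n) (h : initSeg e i = initSeg e' j) :
    i = j := by
  rw [← ncard_initSeg e hi, h, ncard_initSeg e' hj]

lemma apply_eq_of_initSeg_eq {j : Fin n} (h₀ : initSeg e j = initSeg e' j)
    (h₁ : initSeg e (j + 1) = initSeg e' (j + 1)) : e j = e' j := by
  rwa [initSeg_succ, initSeg_succ, h₀, insert_inj] at h₁
  simp [← h₀]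

lemma initSeg_eq_of_notMem_segDisagreement {i : ℕ} (hi : i ≤ n)
    (h : i ∉ segDisagreement e e') : initSeg e i = initSeg e' i := by
  by_contra hne
  exact h ⟨hi, hne⟩

lemma initSegs_diff : initSegs e \ initSegs e' = initSeg e '' segDisagreement e e' := by
  ext A
  constructor
  · rintro ⟨⟨i, hi, rfl⟩, hA⟩
    exact ⟨i, ⟨hi, fun h => hA ⟨i, hi, h.symm⟩⟩, rfl⟩
  · rintro ⟨i, ⟨hi, hne⟩, rfl⟩
    refine ⟨⟨i, hi, rfl⟩, ?_⟩
    rintro ⟨j, hj, h⟩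
    obtain rfl := eq_of_initSeg_eq hj hi h
    exact hne h.symm

variable (e e') in
lemma segDisagreement_comm : segDisagreement e e' = segDisagreement e' e := by
  simp only [segDisagreement, ne_comm]

variable (e e') in
lemma ncard_symmDiff_initSegs :
    (symmDiff (initSegs e) (initSegs e')).ncard = 2 * (segDisagreement e e').ncard := by
  have ncard_image {e e' : Fin n ≃ α} :
      (initSeg e '' segDisagreement e e').ncard = (segDisagreement e e').ncard :=
    InjOn.ncard_image fun i hi j hj h => eq_of_initSeg_eq hi.1 hj.1 h
  have hfin {e e' : Fin n ≃ α} : (initSegs e \ initSegs e').Finite :=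
    ((finite_Iic n).image _).sdiff
  rw [Set.symmDiff_def, ncard_union_eq disjoint_sdiff_sdiff hfin hfin, initSegs_diff,
    initSegs_diff, ncard_image, ncard_image, segDisagreement_comm e' e, two_mul]

lemma exists_of_segDisagreement_eq_singleton {k : ℕ} (h : segDisagreement e e' = {k}) :
    ∃ m : Fin n, k = m + 1 ∧ initSeg e m = initSeg e' m ∧ e m ≠ e' m := by
  obtain ⟨hk, hne⟩ : k ∈ segDisagreement e e' := h ▸ rfl
  have agree {i : ℕ} (hi : i ≤ n) (hik : i ≠ k) : initSeg e i = initSeg e' i :=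
    initSeg_eq_of_notMem_segDisagreement hi (h ▸ hik)
  obtain ⟨m, rfl⟩ : ∃ m, k = m + 1 :=
    Nat.exists_eq_succ_of_ne_zero fun h0 => hne (by rw [h0, initSeg_zero, initSeg_zero])
  have h₀ := agree (i := m) (by omega) (by omega)
  have hm : m < n := by omega
  refine ⟨⟨m, hm⟩, rfl, h₀, fun heq => hne ?_⟩
  rw [initSeg_succ e ⟨m, hm⟩, initSeg_succ e' ⟨m, hm⟩, heq, h₀]

lemma apply_eq_apply_succ_of_initSeg_eq {m : Fin n} (hm : (m : ℕ) + 1 < n)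
    (h₀ : initSeg e m = initSeg e' m) (hne : e m ≠ e' m)
    (h₂ : initSeg e (m + 2) = initSeg e' (m + 2)) : e' m = e ⟨m + 1, hm⟩ := by
  have hmem : e' m ∈ initSeg e (m + 2) := by simp [h₂]
  rw [initSeg_succ e ⟨m + 1, hm⟩, initSeg_succ e m] at hmem
  rcases hmem with h | h | h
  · exact h
  · exact absurd h.symm hne
  · simp [h₀] at h

lemma IsAdjacentSwap.of_segDisagreement_eq_singleton {k : ℕ} (h : segDisagreement e e' = {k}) :
    IsAdjacentSwap e e' := by
  obtain ⟨m, rfl, h₀, hne⟩ := exists_of_segDisagreement_eq_singleton h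
  have agree {i : ℕ} (hi : i ≤ n) (hik : i ≠ m + 1) : initSeg e i = initSeg e' i :=
    initSeg_eq_of_notMem_segDisagreement hi (h ▸ hik)
  obtain ⟨hk, hdiff⟩ : (m : ℕ) + 1 ∈ segDisagreement e e' := h ▸ rfl
  have hm : (m : ℕ) + 1 < n := lt_of_le_of_ne hk fun hn =>
    hdiff (by rw [initSeg_of_le e hn.ge, initSeg_of_le e' hn.ge])
  have h₂ := agree (i := m + 2) (by omega) (by omega)
  refine ⟨m, hm, apply_eq_apply_succ_of_initSeg_eq hm h₀ hne h₂,
    (apply_eq_apply_succ_of_initSeg_eq hm h₀.symm hne.symm h₂.symm).symm,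
    fun j hjm hjm' => ?_⟩
  have hj : (j : ℕ) ≠ m := fun h => hjm (Fin.ext h)
  have hj' : (j : ℕ) ≠ m + 1 := fun h => hjm' (Fin.ext h)
  exact (apply_eq_of_initSeg_eq (agree j.2.le hj') (agree j.2 (by omega))).symm

lemma IsAdjacentSwap.exists_segDisagreement_eq_singleton (h : IsAdjacentSwap e e') :
    ∃ k, segDisagreement e e' = {k} := by
  obtain ⟨i, hi, hi₀, hi₁, hj⟩ := h
  have agree {m : ℕ} (hm : m ≠ i + 1) : initSeg e m = initSeg e' m := by
    ext p
    obtain ⟨j, rfl⟩ := e'.surjective p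
    rw [apply_mem_initSeg]
    by_cases hji : j = i
    · simp only [hji, hi₀, apply_mem_initSeg]; omega
    by_cases hji' : j = ⟨i + 1, hi⟩
    · simp only [hji', hi₁, apply_mem_initSeg, Fin.val_mk]; omega
    · rw [hj j hji hji', apply_mem_initSeg]
  refine ⟨i + 1, Set.eq_singleton_iff_unique_mem.2 ⟨⟨hi.le, fun heq => ?_⟩,
    fun m hm => by_contra fun hne => hm.2 (agree hne)⟩⟩
  have : e i ∈ initSeg e (i + 1) := by simp
  simp [heq, ← hi₁] at this

variable (e e') in
lemma ncard_segDisagreement_eq_one_iff : (segDisagreement e e').ncard = 1 ↔ IsAdjacentSwap e e' :=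
  ⟨fun h => let ⟨_, hk⟩ := ncard_eq_one.1 h; .of_segDisagreement_eq_singleton hk,
    fun h => let ⟨_, hk⟩ := h.exists_segDisagreement_eq_singleton; ncard_eq_one.2 ⟨_, hk⟩⟩

lemma exists_insert_of_symmDiff_initSegs_eq_pair {A B : Set α}
    (h : symmDiff (initSegs e) (initSegs e') = {A, B}) (hAB : A ≠ B) :
    ∃ p q S, p ∉ S ∧ q ∉ S ∧ p ≠ q ∧ A = insert p S ∧ B = insert q S := by
  have hcard := ncard_symmDiff_initSegs e e'
  rw [h, ncard_pair hAB] at hcard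
  obtain ⟨k, hk⟩ := ncard_eq_one.1 (by omega : (segDisagreement e e').ncard = 1)
  obtain ⟨m, rfl, h₀, hne⟩ := exists_of_segDisagreement_eq_singleton hk
  rw [Set.symmDiff_def, initSegs_diff, initSegs_diff, segDisagreement_comm e' e, hk,
    image_singleton, image_singleton, singleton_union, initSeg_succ, initSeg_succ, ← h₀] at h
  rcases pair_eq_pair_iff.1 h with ⟨hA, hB⟩ | ⟨hA, hB⟩
  · exact ⟨_, _, _, by simp, by simp [h₀], hne, hA.symm, hB.symm⟩
  · exact ⟨_, _, _, by simp [h₀], by simp, hne.symm, hB.symm, hA.symm⟩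

end InitialSegments

section DownClosed

variable {α : Type*} (r : α → α → Prop)

def IsDownClosed (S : Set α) : Prop := ∀ ⦃p q : α⦄, p ∈ S → r q p → q ∈ S

variable {r}

lemma IsDownClosed.isLowerSet [PartialOrder α] (hr : ∀ p q : α, p < q → r p q) {S : Set α}
    (hS : IsDownClosed r S) : IsLowerSet S := fun p q hqp hp =>
  hqp.eq_or_lt.elim (· ▸ hp) fun h => hS hp (hr q p h)

variable {n : ℕ} {e : Fin n ≃ α}

lemma isDownClosed_initSeg [Std.Asymm r] (he : ∀ i j, i < j → r (e i) (e j)) (i : ℕ) :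
    IsDownClosed r (initSeg e i) := by
  intro p q hp hqp
  obtain ⟨j, rfl⟩ := e.surjective p
  obtain ⟨k, rfl⟩ := e.surjective q
  simp only [apply_mem_initSeg] at hp ⊢
  have hkj : k < j := by
    rcases lt_trichotomy k j with hkj | rfl | hjk
    · exact hkj
    · exact absurd hqp (irrefl _)
    · exact absurd hqp (asymm (he j k hjk))
  exact (Fin.lt_def.1 hkj).trans hp

lemma IsDownClosed.mem_initSegs (he : ∀ i j, i < j → r (e i) (e j)) {S : Set α}
    (hS : IsDownClosed r S) : S ∈ initSegs e := by
  have hT : IsLowerSet (e ⁻¹' S) := fun k j hjk hk =>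
    hjk.eq_or_lt.elim (· ▸ hk) fun h => hS hk (he j k h)
  rcases hT.eq_univ_or_Iio with hT | ⟨a, hT⟩
  · refine ⟨n, mem_Iic.2 le_rfl, (initSeg_of_le e le_rfl).trans ?_⟩
    exact (univ_subset_iff.1 (e.surjective.range_eq ▸ preimage_eq_univ_iff.1 hT)).symm
  · refine ⟨a, a.2.le, ?_⟩
    ext p
    obtain ⟨j, rfl⟩ := e.surjective p
    rw [apply_mem_initSeg, ← mem_preimage, hT, mem_Iio, Fin.lt_def]

end DownClosed

lemma insert_diamond {α : Type*} {p q : α} {S : Set α} (hp : p ∉ S) (hq : q ∉ S)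
    (hpq : p ≠ q) :
    insert p S ⋖ insert p S ∪ insert q S ∧ insert q S ⋖ insert p S ∪ insert q S ∧
      insert p S ∩ insert q S ⋖ insert p S ∧ insert p S ∩ insert q S ⋖ insert q S := by
  have hunion : insert p S ∪ insert q S = insert q (insert p S) := by
    ext; simp only [mem_union, mem_insert_iff]; tauto
  have hinter : insert p S ∩ insert q S = S := by
    ext x; simp only [mem_inter_iff, mem_insert_iff]; grind
  rw [hinter, hunion]
  refine ⟨covBy_insert (by simp [hpq.symm, hq]), ?_, covBy_insert hp, covBy_insert hq⟩
  rw [insert_comm]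
  exact covBy_insert (by simp [hpq, hp])

lemma chainOf_eq_preimage_initSegs {L : Type*} [Lattice L] {slt : JI L → JI L → Prop}
    [Std.Asymm slt] {n : ℕ} {e : Fin n ≃ JI L} (he : ∀ i j, i < j → slt (e i) (e j)) :
    chainOf slt = bIdealSet ⁻¹' initSegs e := by
  ext a
  change IsDownClosed slt (bIdealSet a) ↔ bIdealSet a ∈ initSegs e
  refine ⟨IsDownClosed.mem_initSegs he, ?_⟩
  rintro ⟨i, -, hi⟩
  exact hi ▸ isDownClosed_initSeg he i

section Birkhoff

variable {L : Type*} [DistribLattice L] [Fintype L] [OrderBot L]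
  [DecidablePred (SupIrred : L → Prop)]

lemma birkhoffSet_eq_bIdealSet (a : L) : OrderEmbedding.birkhoffSet a = bIdealSet a := by
  rw [OrderEmbedding.birkhoffSet_apply]
  rfl

lemma bIdealSet_injective : Function.Injective (bIdealSet : L → Set (JI L)) := fun a b h =>
  OrderEmbedding.birkhoffSet.injective <| by
    rwa [birkhoffSet_eq_bIdealSet, birkhoffSet_eq_bIdealSet]

lemma IsLowerSet.mem_range_bIdealSet {S : Set (JI L)} (hS : IsLowerSet S) :
    S ∈ range (bIdealSet : L → Set (JI L)) :=
  ⟨(OrderIso.lowerSetSupIrred (α := L)).symm ⟨S, hS⟩,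
    congrArg SetLike.coe ((OrderIso.lowerSetSupIrred (α := L)).apply_symm_apply _)⟩

lemma diamond_of_bIdealSet_eq_insert {a b : L} {p q : JI L} {S : Set (JI L)}
    (ha : bIdealSet a = insert p S) (hb : bIdealSet b = insert q S) (hp : p ∉ S) (hq : q ∉ S)
    (hpq : p ≠ q) : a ⋖ a ⊔ b ∧ b ⋖ a ⊔ b ∧ a ⊓ b ⋖ a ∧ a ⊓ b ⋖ b := by
  have key := insert_diamond hp hq hpq
  rw [← ha, ← hb, ← birkhoffSet_eq_bIdealSet, ← birkhoffSet_eq_bIdealSet,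
    ← OrderEmbedding.birkhoffSet_sup, ← OrderEmbedding.birkhoffSet_inf] at key
  obtain ⟨h₁, h₂, h₃, h₄⟩ := key
  exact ⟨h₁.of_image _, h₂.of_image _, h₃.of_image _, h₄.of_image _⟩

variable {slt : JI L → JI L → Prop} [Std.Asymm slt] {n : ℕ} {e : Fin n ≃ JI L}

lemma initSegs_subset_range_bIdealSet (hslt : ∀ p q : JI L, p < q → slt p q)
    (he : ∀ i j, i < j → slt (e i) (e j)) :
    initSegs e ⊆ range (bIdealSet : L → Set (JI L)) := by
  rintro _ ⟨i, -, rfl⟩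
  exact ((isDownClosed_initSeg he i).isLowerSet hslt).mem_range_bIdealSet

end Birkhoff

/-- For two linearizations `≺`, `≺'` of the order on the join-irreducibles of a finite
distributive lattice `L`, the maximal chains `C_≺`, `C_≺'` have symmetric difference of
size two iff the corresponding enumerations differ by exchanging two consecutive
elements; and when the symmetric difference is `{a, b}`, `{a,b}` is a diamond pair:
`a ∨ b` covers both `a` and `b`, and both cover `a ∧ b`. -/
theorem stmt12 {L : Type*} [DistribLattice L] [Fintype L] [OrderBot L]
    [DecidablePred (SupIrred : L → Prop)]
    (slt slt' : JI L → JI L → Prop)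
    (h1 : IsStrictTotalOrder (JI L) slt) (h1' : ∀ p q : JI L, p < q → slt p q)
    (h2 : IsStrictTotalOrder (JI L) slt') (h2' : ∀ p q : JI L, p < q → slt' p q)
    (e e' : Fin (Fintype.card (JI L)) ≃ JI L)
    (he : ∀ i j, i < j → slt (e i) (e j))
    (he' : ∀ i j, i < j → slt' (e' i) (e' j)) :
    ((symmDiff (chainOf slt) (chainOf slt')).ncard = 2 ↔
      ∃ i : Fin (Fintype.card (JI L)), ∃ hi : (i : ℕ) + 1 < Fintype.card (JI L),
        e' i = e ⟨(i : ℕ) + 1, hi⟩ ∧ e' ⟨(i : ℕ) + 1, hi⟩ = e i ∧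
        ∀ j, j ≠ i → j ≠ ⟨(i : ℕ) + 1, hi⟩ → e' j = e j) ∧
    ∀ a b : L, a ≠ b → symmDiff (chainOf slt) (chainOf slt') = {a, b} →
      a ⋖ a ⊔ b ∧ b ⋖ a ⊔ b ∧ a ⊓ b ⋖ a ∧ a ⊓ b ⋖ b := by
  have := h1
  have := h2
  have hchains : symmDiff (chainOf slt) (chainOf slt') =
      bIdealSet ⁻¹' symmDiff (initSegs e) (initSegs e') := by
    rw [chainOf_eq_preimage_initSegs he, chainOf_eq_preimage_initSegs he', preimage_symmDiff]
  have hrange : symmDiff (initSegs e) (initSegs e') ⊆ range (bIdealSet : L → Set (JI L)) :=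
    symmDiff_subset_union.trans (union_subset (initSegs_subset_range_bIdealSet h1' he)
      (initSegs_subset_range_bIdealSet h2' he'))
  refine ⟨?_, fun a b hab h => ?_⟩
  · rw [hchains, ncard_preimage_of_injective_subset_range bIdealSet_injective hrange,
      ncard_symmDiff_initSegs]
    exact (by omega : 2 * _ = 2 ↔ _ = 1).trans (ncard_segDisagreement_eq_one_iff e e')
  · have hpair : symmDiff (initSegs e) (initSegs e') = {bIdealSet a, bIdealSet b} := by
      rw [← image_preimage_eq_of_subset hrange, ← hchains, h, image_pair]
    obtain ⟨p, q, S, hp, hq, hpq, ha, hb⟩ :=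
      exists_insert_of_symmDiff_initSegs_eq_pair hpair (bIdealSet_injective.ne hab)
    exact diamond_of_bIdealSet_eq_insert ha hb hp hq hpq
end

section
/- Let Q be a convex polytope with a polyhedral subdivision Q_1,...,Q_n and let f: Q → ℝ be a function that is affine on each Q_i. If f is convex on every union Q_i ∪ Q_j of two parts sharing a common facet, then f is convex on Q. -/
/-- The dimension of a subset of a real vector space: the rank of the direction of
its affine span. -/
noncomputable def polyDim {E : Type*} [AddCommGroup E] [Module ℝ E] (s : Set E) : ℕ :=
  Module.finrank ℝ (affineSpan ℝ s).direction

/-- `f` is convex on `s` in the piecewise sense: the convexity inequality holds for all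
convex combinations of points of `s` that again lie in `s`. -/
def PartialConvexOn {E : Type*} [AddCommGroup E] [Module ℝ E] (s : Set E)
    (f : E → ℝ) : Prop :=
  ∀ ⦃x⦄, x ∈ s → ∀ ⦃y⦄, y ∈ s → ∀ ⦃a b : ℝ⦄, 0 ≤ a → 0 ≤ b → a + b = 1 →
    a • x + b • y ∈ s → f (a • x + b • y) ≤ a * f x + b * f y

/-!
Convexity along a segment `[x, y]` is a local matter: `f` is continuous, so it suffices that at
each interior point `z` of the segment `f` satisfies the midpoint inequality for two nearby points
on either side. These lie in pieces `Qᵢ ∋ z` and `Qⱼ ∋ z`. If `Qᵢ ∩ Qⱼ` is full-dimensional it is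
a face equal to both pieces, so `f` is affine there; if it is a facet, the hypothesis applies.
Intersections of codimension at least two are avoided by moving `x` off the finitely many proper
affine subspaces spanned by `y` and such an intersection, and continuity of `f` then gives the
convexity inequality for every `x`.
-/

open Set Filter Topology AffineMap

section LineMap

variable {k E : Type*} [Field k] [AddCommGroup E] [Module k E]

lemma lineMap_mem_of_lineMap_mem_of_ne {W : AffineSubspace k E} {x p : E} {s t : k}
    (hs : lineMap x p s ∈ W) (ht : lineMap x p t ∈ W) (hst : s ≠ t) (r : k) :
    lineMap x p r ∈ W := by
  have hc : (r - s) / (t - s) * (t - s) = r - s := div_mul_cancel₀ _ (sub_ne_zero.2 hst.symm)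
  convert AffineMap.lineMap_mem ((r - s) / (t - s)) hs ht using 1
  simp only [lineMap_apply_module']
  linear_combination (norm := module) -hc • (p - x)

lemma subsingleton_setOf_lineMap_mem {W : AffineSubspace k E} {x p : E} {r : k}
    (hr : lineMap x p r ∉ W) : {t : k | lineMap x p t ∈ W}.Subsingleton :=
  fun _ hs _ ht => by_contra fun hst => hr (lineMap_mem_of_lineMap_mem_of_ne hs ht hst r)

lemma left_mem_affineSpan_insert_of_lineMap_mem {s : Set E} {x y : E} {t : k}
    (hz : lineMap x y t ∈ s) (ht : t ≠ 1) : x ∈ affineSpan k (insert y s) := by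
  have hy : lineMap x y (1 : k) ∈ affineSpan k (insert y s) := by
    simpa using mem_affineSpan k (mem_insert y s)
  simpa using lineMap_mem_of_lineMap_mem_of_ne
    (mem_affineSpan k (mem_insert_of_mem y hz)) hy ht 0

end LineMap

section Density

variable {E : Type*} [NormedAddCommGroup E] [NormedSpace ℝ E] {κ : Type*}

lemma eventually_nhdsGT_lineMap_notMem (K : Finset κ) (W : κ → AffineSubspace ℝ E) {x p : E}
    (h : ∀ k ∈ K, ∃ r : ℝ, lineMap x p r ∉ W k) :
    ∀ᶠ t in 𝓝[>] (0 : ℝ), ∀ k ∈ K, lineMap x p t ∉ W k := by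
  have hcof : ∀ᶠ t in cofinite, ∀ k ∈ K, lineMap x p t ∉ W k :=
    (eventually_all_finset K).2 fun k hk =>
      let ⟨_, hr⟩ := h k hk
      (subsingleton_setOf_lineMap_mem hr).finite.eventually_cofinite_notMem
  exact hcof.filter_mono <|
    (nhdsWithin_mono _ fun t (ht : 0 < t) => ht.ne').trans (nhdsNE_le_cofinite 0)

lemma Convex.exists_mem_forall_notMem {S : Set E} (hS : Convex ℝ S) (hne : S.Nonempty)
    (K : Finset κ) (W : κ → AffineSubspace ℝ E) (h : ∀ k ∈ K, ¬ S ⊆ W k) :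
    ∃ s ∈ S, ∀ k ∈ K, s ∉ W k := by
  classical
  induction K using Finset.induction with
  | empty => exact hne.imp fun s hs => ⟨hs, by simp⟩
  | insert k K _ ih =>
    obtain ⟨s, hs, hsK⟩ := ih fun l hl => h l (Finset.mem_insert_of_mem hl)
    obtain ⟨p, hp, hpk⟩ := not_subset.1 (h k (Finset.mem_insert_self k K))
    have hline : ∀ l ∈ insert k K, ∃ r : ℝ, lineMap s p r ∉ W l := by
      intro l hl
      rcases Finset.mem_insert.1 hl with rfl | hl
      · exact ⟨1, by simpa using hpk⟩
      · exact ⟨0, by simpa using hsK l hl⟩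
    obtain ⟨t, ht, htW⟩ :=
      (Eventually.and (Ioo_mem_nhdsGT one_pos) (eventually_nhdsGT_lineMap_notMem _ W hline)).exists
    exact ⟨_, hS.lineMap_mem hs hp ⟨ht.1.le, ht.2.le⟩, htW⟩

lemma Convex.subset_closure_diff_biUnion {S : Set E} (hS : Convex ℝ S)
    (K : Finset κ) (W : κ → AffineSubspace ℝ E) (h : ∀ k ∈ K, ¬ S ⊆ W k) :
    S ⊆ closure (S \ ⋃ k ∈ K, (W k : Set E)) := by
  intro x hx
  obtain ⟨s, hs, hsK⟩ := hS.exists_mem_forall_notMem ⟨x, hx⟩ K W h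
  have hline : ∀ k ∈ K, ∃ r : ℝ, lineMap x s r ∉ W k :=
    fun k hk => ⟨1, by simpa using hsK k hk⟩
  have hlim : Tendsto (lineMap x s) (𝓝[>] (0 : ℝ)) (𝓝 x) := by
    simpa using (lineMap_continuous (p := x) (q := s)).continuousWithinAt (s := Ioi (0 : ℝ))
      (x := 0) |>.tendsto
  refine mem_closure_of_tendsto hlim ?_
  filter_upwards [Ioo_mem_nhdsGT one_pos, eventually_nhdsGT_lineMap_notMem K W hline]
    with t ht htW
  exact ⟨hS.lineMap_mem hx hs ⟨ht.1.le, ht.2.le⟩, by simpa using htW⟩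

end Density

section MidpointConvexAcross

variable {E : Type*} [AddCommGroup E] [Module ℝ E]

def MidpointConvexAcross (f : E → ℝ) (A B : Set E) : Prop :=
  ∀ ⦃u v : E⦄, u ∈ A → v ∈ B → midpoint ℝ u v ∈ A ∩ B →
    f (midpoint ℝ u v) ≤ (f u + f v) / 2

lemma PartialConvexOn.midpointConvexAcross {f : E → ℝ} {A B : Set E}
    (h : PartialConvexOn (A ∪ B) f) : MidpointConvexAcross f A B := by
  intro u v hu hv hm
  have hmid : midpoint ℝ u v = (2⁻¹ : ℝ) • u + (2⁻¹ : ℝ) • v := by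
    rw [midpoint_eq_smul_add, smul_add, invOf_eq_inv]
  rw [hmid] at hm ⊢
  have := h (Or.inl hu) (Or.inr hv) (by norm_num) (by norm_num) (by norm_num) (Or.inl hm.1)
  linarith

lemma midpointConvexAcross_self_of_eqOn {f : E → ℝ} {A : Set E} {g : E →ᵃ[ℝ] ℝ} (hf : EqOn f g A) :
    MidpointConvexAcross f A A := by
  intro u v hu hv hm
  rw [hf hm.1, hf hu, hf hv, g.map_midpoint, midpoint_eq_smul_add, invOf_eq_inv, smul_eq_mul]
  linarith

end MidpointConvexAcross

section Dimension

variable {E : Type*} [NormedAddCommGroup E] [NormedSpace ℝ E] [FiniteDimensional ℝ E]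

lemma polyDim_mono {s t : Set E} (h : s ⊆ t) : polyDim s ≤ polyDim t :=
  Submodule.finrank_mono (AffineSubspace.direction_le (affineSpan_mono ℝ h))

lemma not_subset_affineSpan_insert {s S : Set E} (h : polyDim s + 2 ≤ polyDim S) (y : E) :
    ¬ S ⊆ affineSpan ℝ (insert y s) := by
  intro hS
  have hspan : polyDim (affineSpan ℝ (insert y s) : Set E) = polyDim (insert y s) := by
    rw [polyDim, AffineSubspace.affineSpan_coe]; rfl
  have hins : polyDim (insert y s) ≤ polyDim s + 1 := by
    rw [polyDim, polyDim, direction_affineSpan, direction_affineSpan]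
    exact finrank_vectorSpan_insert_le_set ℝ s y
  have := polyDim_mono hS
  omega

lemma IsExtreme.subset_of_subset_affineSpan {C F : Set E} (hF : Convex ℝ F)
    (hext : IsExtreme ℝ C F) (hspan : C ⊆ affineSpan ℝ F) : C ⊆ F := by
  intro c hc
  rcases F.eq_empty_or_nonempty with rfl | hne
  · simpa using hspan hc
  obtain ⟨m, hm, -⟩ := mem_intrinsicInterior.1 (hne.intrinsicInterior hF).some_mem
  have hmF : (m : E) ∈ F := interior_subset (s := ((↑) : affineSpan ℝ F → E) ⁻¹' F) hm
  let φ : ℝ → affineSpan ℝ F := fun t => ⟨lineMap (m : E) c t, lineMap_mem t m.2 (hspan hc)⟩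
  have hφ : Continuous φ := lineMap_continuous.subtype_mk _
  have hφ0 : φ 0 = m := by ext; simp [φ]
  -- As `m` is in the relative interior of `F`, going a little past `m` away from `c` stays in `F`.
  obtain ⟨t, ht, htF⟩ : ∃ t : ℝ, t < 0 ∧ lineMap (m : E) c t ∈ F := by
    have := (hφ.tendsto 0).eventually (hφ0 ▸ isOpen_interior.mem_nhds hm)
    obtain ⟨t, ht, htF⟩ := ((this.filter_mono nhdsWithin_le_nhds).and
      (self_mem_nhdsWithin (s := Iio (0 : ℝ)))).exists
    exact ⟨t, htF, interior_subset (s := ((↑) : affineSpan ℝ F → E) ⁻¹' F) ht⟩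
  have h1t : 0 < 1 - t := by linarith
  refine hext.left_mem_of_mem_openSegment hc (hext.subset htF) hmF
    ⟨-t / (1 - t), 1 / (1 - t), div_pos (neg_pos.2 ht) h1t, div_pos one_pos h1t, ?_, ?_⟩
  · field_simp; ring
  · rw [lineMap_apply_module', div_eq_inv_mul, mul_smul, one_div, ← smul_add,
      show -t • c + (t • (c - m) + m) = (1 - t) • (m : E) by module, smul_smul,
      inv_mul_cancel₀ h1t.ne', one_smul]

lemma IsExtreme.eq_of_polyDim_le {C F : Set E} (hF : Convex ℝ F) (hne : F.Nonempty)
    (hext : IsExtreme ℝ C F) (hdim : polyDim C ≤ polyDim F) : F = C := by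
  have hle : affineSpan ℝ F ≤ affineSpan ℝ C := affineSpan_mono ℝ hext.subset
  have hdir := Submodule.eq_of_le_of_finrank_le (AffineSubspace.direction_le hle) hdim
  have hspan := AffineSubspace.eq_of_direction_eq_of_nonempty_of_le hdir
    (hne.mono (subset_affineSpan ℝ F)) hle
  exact hext.subset.antisymm (hext.subset_of_subset_affineSpan hF (hspan ▸ subset_affineSpan ℝ C))

lemma midpointConvexAcross_of_le_polyDim_inter {ι : Type*} {P : ι → Set E} {f : E → ℝ} {d : ℕ}
    (hP : ∀ i, Convex ℝ (P i)) (hdim : ∀ i, polyDim (P i) = d)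
    (hcomplex : ∀ i j, i ≠ j → P i ∩ P j = ∅ ∨
      (IsExtreme ℝ (P i) (P i ∩ P j) ∧ IsExtreme ℝ (P j) (P i ∩ P j)))
    (haff : ∀ i, ∃ g : E →ᵃ[ℝ] ℝ, EqOn f g (P i))
    (hconv : ∀ i j, i ≠ j →
      (IsExtreme ℝ (P i) (P i ∩ P j) ∧ IsExtreme ℝ (P j) (P i ∩ P j) ∧
        polyDim (P i ∩ P j) + 1 = d) →
      PartialConvexOn (P i ∪ P j) f)
    {i j : ι} (hij : d ≤ polyDim (P i ∩ P j) + 1) : MidpointConvexAcross f (P i) (P j) := by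
  intro u v hu hv hm
  obtain ⟨g, hg⟩ := haff i
  obtain rfl | hne := eq_or_ne i j
  · exact midpointConvexAcross_self_of_eqOn hg hu hv hm
  obtain ⟨hexti, hextj⟩ := (hcomplex i j hne).resolve_left (nonempty_iff_ne_empty.1 ⟨_, hm⟩)
  have hle : polyDim (P i ∩ P j) ≤ d := hdim i ▸ polyDim_mono inter_subset_left
  rcases (by omega : polyDim (P i ∩ P j) + 1 = d ∨ d ≤ polyDim (P i ∩ P j)) with hfacet | hfull
  · exact (hconv i j hne ⟨hexti, hextj, hfacet⟩).midpointConvexAcross hu hv hm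
  · -- A full-dimensional common face is the whole of both pieces.
    have hinter : Convex ℝ (P i ∩ P j) := (hP i).inter (hP j)
    have hi := hexti.eq_of_polyDim_le hinter ⟨_, hm⟩ (hdim i ▸ hfull)
    have hj := hextj.eq_of_polyDim_le hinter ⟨_, hm⟩ (hdim j ▸ hfull)
    rw [← hi.symm.trans hj] at hv hm
    exact midpointConvexAcross_self_of_eqOn hg hu hv hm

end Dimension

section Chord

lemma nonpos_of_forall_le_midpoint {φ : ℝ → ℝ} (hc : ContinuousOn φ (Icc 0 1))
    (h0 : φ 0 ≤ 0) (h1 : φ 1 ≤ 0)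
    (hmid : ∀ t ∈ Ioo (0 : ℝ) 1, ∃ ε > 0, t - ε ∈ Icc (0 : ℝ) 1 ∧ t + ε ∈ Icc (0 : ℝ) 1 ∧
      φ t ≤ (φ (t - ε) + φ (t + ε)) / 2)
    {θ : ℝ} (hθ : θ ∈ Icc (0 : ℝ) 1) : φ θ ≤ 0 := by
  by_contra! hpos
  obtain ⟨w, hw, hwmax⟩ := isCompact_Icc.exists_isMaxOn ⟨θ, hθ⟩ hc
  rw [isMaxOn_iff] at hwmax
  -- The rightmost point where the maximum is attained cannot satisfy the midpoint inequality.
  have hK : IsCompact {t ∈ Icc (0 : ℝ) 1 | φ w ≤ φ t} :=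
    isCompact_Icc.of_isClosed_subset
      (hc.preimage_isClosed_of_isClosed isClosed_Icc isClosed_Ici) inter_subset_left
  obtain ⟨w', ⟨hw'I, hw'M⟩, hw'max⟩ := hK.exists_isGreatest ⟨w, hw, le_rfl⟩
  have hM : 0 < φ w := hpos.trans_le (hwmax θ hθ)
  have hw'0 : w' ≠ 0 := by rintro rfl; linarith
  have hw'1 : w' ≠ 1 := by rintro rfl; linarith
  obtain ⟨ε, hε, hl, hr, hle⟩ :=
    hmid w' ⟨hw'I.1.lt_of_ne' hw'0, hw'I.2.lt_of_ne hw'1⟩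
  have hright : w' + ε ≤ w' := hw'max ⟨hr, by linarith [hwmax _ hl]⟩
  linarith

lemma le_chord_of_forall_le_midpoint {g : ℝ → ℝ} (hc : ContinuousOn g (Icc 0 1))
    (hmid : ∀ t ∈ Ioo (0 : ℝ) 1, ∃ ε > 0, t - ε ∈ Icc (0 : ℝ) 1 ∧ t + ε ∈ Icc (0 : ℝ) 1 ∧
      g t ≤ (g (t - ε) + g (t + ε)) / 2)
    {θ : ℝ} (hθ : θ ∈ Icc (0 : ℝ) 1) : g θ ≤ (1 - θ) * g 0 + θ * g 1 := by
  have := nonpos_of_forall_le_midpoint (φ := fun t => g t - ((1 - t) * g 0 + t * g 1))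
    (hc.sub (by fun_prop)) (by simp) (by simp) (fun t ht => ?_) hθ
  · linarith
  obtain ⟨ε, hε, hl, hr, hle⟩ := hmid t ht
  exact ⟨ε, hε, hl, hr, by linarith⟩

end Chord

section Segment

variable {E : Type*} [NormedAddCommGroup E] [NormedSpace ℝ E] {ι : Type*} [Finite ι]

lemma eventually_forall_mem_imp_mem {X : Type*} [TopologicalSpace X] {P : ι → Set X}
    (hcl : ∀ i, IsClosed (P i)) (z : X) : ∀ᶠ w in 𝓝 z, ∀ i, w ∈ P i → z ∈ P i := by
  refine eventually_all.2 fun i => ?_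
  by_cases hz : z ∈ P i
  · exact Eventually.of_forall fun _ _ => hz
  · filter_upwards [(hcl i).isOpen_compl.mem_nhds hz] with w hw h using absurd h hw

lemma le_chord_of_midpointConvexAcross {P : ι → Set E} (hcl : ∀ i, IsClosed (P i))
    {f : E → ℝ} {x y : E} (hcov : ∀ t ∈ Icc (0 : ℝ) 1, ∃ i, lineMap x y t ∈ P i)
    (hf : ContinuousOn (fun t : ℝ => f (lineMap x y t)) (Icc 0 1))
    (hacross : ∀ t ∈ Ioo (0 : ℝ) 1, ∀ i j, lineMap x y t ∈ P i → lineMap x y t ∈ P j →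
      MidpointConvexAcross f (P i) (P j))
    {θ : ℝ} (hθ : θ ∈ Icc (0 : ℝ) 1) : f (lineMap x y θ) ≤ (1 - θ) * f x + θ * f y := by
  refine (le_chord_of_forall_le_midpoint hf (fun t ht => ?_) hθ).trans_eq (by simp)
  have hev : ∀ᶠ s in 𝓝 t, s ∈ Icc (0 : ℝ) 1 ∧ ∀ i, lineMap x y s ∈ P i → lineMap x y t ∈ P i :=
    Eventually.and (Icc_mem_nhds ht.1 ht.2)
      ((lineMap_continuous.tendsto t).eventually (eventually_forall_mem_imp_mem hcl _))
  obtain ⟨δ, hδ, hball⟩ := Metric.eventually_nhds_iff.1 hev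
  obtain ⟨hl, hli⟩ := hball (show dist (t - δ / 2) t < δ by
    rw [Real.dist_eq, abs_of_neg (by linarith)]; linarith)
  obtain ⟨hr, hrj⟩ := hball (show dist (t + δ / 2) t < δ by
    rw [Real.dist_eq, abs_of_pos (by linarith)]; linarith)
  obtain ⟨i, hi⟩ := hcov _ hl
  obtain ⟨j, hj⟩ := hcov _ hr
  have hmid : midpoint ℝ (lineMap x y (t - δ / 2)) (lineMap x y (t + δ / 2)) = lineMap x y t := by
    rw [← AffineMap.map_midpoint, midpoint_eq_smul_add, invOf_eq_inv, smul_eq_mul]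
    congr 1
    ring
  refine ⟨δ / 2, half_pos hδ, hl, hr, ?_⟩
  have := hacross t ht i j (hli i hi) (hrj j hj) hi hj (hmid ▸ ⟨hli i hi, hrj j hj⟩)
  rwa [hmid] at this

end Segment

section Convexity

variable {E : Type*} [NormedAddCommGroup E] [NormedSpace ℝ E] {f : E → ℝ}

lemma continuousOn_iUnion_of_eqOn_affineMap [FiniteDimensional ℝ E] {ι : Type*} [Finite ι]
    {P : ι → Set E} (hcl : ∀ i, IsClosed (P i)) (haff : ∀ i, ∃ g : E →ᵃ[ℝ] ℝ, EqOn f g (P i)) :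
    ContinuousOn f (⋃ i, P i) :=
  (locallyFinite_of_finite P).continuousOn_iUnion hcl fun i =>
    let ⟨g, hg⟩ := haff i
    g.continuous_of_finiteDimensional.continuousOn.congr hg

lemma convexOn_of_continuousOn_of_dense {Q : Set E} (hQ : Convex ℝ Q) (hf : ContinuousOn f Q)
    (h : ∀ y ∈ Q, Q ⊆ closure
      {x ∈ Q | ∀ θ ∈ Icc (0 : ℝ) 1, f (lineMap x y θ) ≤ (1 - θ) * f x + θ * f y}) :
    ConvexOn ℝ Q f := by
  refine ⟨hQ, fun x hx y hy a b ha hb hab => ?_⟩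
  obtain rfl : a = 1 - b := by linarith
  have hb1 : b ∈ Icc (0 : ℝ) 1 := ⟨hb, by linarith⟩
  have hleft : ContinuousOn (fun x' => f (lineMap x' y b)) Q :=
    hf.comp (by simp only [lineMap_apply_module]; fun_prop)
      fun x' hx' => hQ.lineMap_mem hx' hy hb1
  have hright : ContinuousOn (fun x' => (1 - b) * f x' + b * f y) Q :=
    (continuousOn_const.mul hf).add continuousOn_const
  have := ContinuousWithinAt.closure_le (h y hy hx) ((hleft x hx).mono fun _ h => h.1)
    ((hright x hx).mono fun _ h => h.1) fun x' hx' => hx'.2 b hb1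
  simpa [lineMap_apply_module] using this

end Convexity

/-- Let `Q` be a convex polytope subdivided into polytopes `Q_1, …, Q_n` of the same
dimension forming a polyhedral complex, and let `f` be affine on each `Q_i`. If `f` is
convex on every union `Q_i ∪ Q_j` of two parts sharing a common facet, then `f` is
convex on `Q`. -/
theorem stmt14 {N : Type*} [Fintype N] (n : ℕ) (Q : Set (N → ℝ))
    (Qp : Fin n → Set (N → ℝ))
    (V : Finset (N → ℝ)) (hQ : Q = convexHull ℝ (V : Set (N → ℝ)))
    (hVp : ∀ i, ∃ Vi : Finset (N → ℝ), Qp i = convexHull ℝ (Vi : Set (N → ℝ)))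
    (hcover : (⋃ i, Qp i) = Q)
    (hdim : ∀ i, polyDim (Qp i) = polyDim Q)
    (hcomplex : ∀ i j, i ≠ j → Qp i ∩ Qp j = ∅ ∨
      (IsExtreme ℝ (Qp i) (Qp i ∩ Qp j) ∧ IsExtreme ℝ (Qp j) (Qp i ∩ Qp j)))
    (f : (N → ℝ) → ℝ)
    (haff : ∀ i, ∃ g : (N → ℝ) →ᵃ[ℝ] ℝ, Set.EqOn f g (Qp i))
    (hconv : ∀ i j, i ≠ j →
      (IsExtreme ℝ (Qp i) (Qp i ∩ Qp j) ∧ IsExtreme ℝ (Qp j) (Qp i ∩ Qp j) ∧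
        polyDim (Qp i ∩ Qp j) + 1 = polyDim Q) →
      PartialConvexOn (Qp i ∪ Qp j) f) :
    ConvexOn ℝ Q f := by
  choose Vp hVp using hVp
  have hQconv : Convex ℝ Q := hQ ▸ convex_convexHull ℝ _
  have hPconv : ∀ i, Convex ℝ (Qp i) := fun i => hVp i ▸ convex_convexHull ℝ _
  have hPcl : ∀ i, IsClosed (Qp i) := fun i =>
    hVp i ▸ ((Vp i).finite_toSet.isCompact_convexHull ℝ).isClosed
  have hf : ContinuousOn f Q := hcover ▸ continuousOn_iUnion_of_eqOn_affineMap hPcl haff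
  refine convexOn_of_continuousOn_of_dense hQconv hf fun y hy => ?_
  -- A segment from `x` to `y` meets a low-dimensional `Qp i ∩ Qp j` away from `y` only if
  -- `x` lies on the proper affine subspace spanned by `y` and that intersection.
  let K := Finset.univ.filter fun p : Fin n × Fin n => polyDim (Qp p.1 ∩ Qp p.2) + 2 ≤ polyDim Q
  let W (p : Fin n × Fin n) := affineSpan ℝ (insert y (Qp p.1 ∩ Qp p.2))
  refine (hQconv.subset_closure_diff_biUnion K W fun p hp =>
    not_subset_affineSpan_insert (Finset.mem_filter.1 hp).2 y).trans (closure_mono ?_)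
  rintro x ⟨hx, hxW⟩
  refine ⟨hx, fun θ hθ => le_chord_of_midpointConvexAcross hPcl ?_ ?_ ?_ hθ⟩
  · intro t ht
    simpa [← hcover] using hQconv.lineMap_mem hx hy ht
  · exact hf.comp lineMap_continuous.continuousOn fun t ht => hQconv.lineMap_mem hx hy ht
  · intro t ht i j hi hj
    refine midpointConvexAcross_of_le_polyDim_inter hPconv hdim hcomplex haff hconv ?_
    by_contra! hlow
    have hK : (i, j) ∈ K :=
      Finset.mem_filter.2 ⟨Finset.mem_univ _, show polyDim (Qp i ∩ Qp j) + 2 ≤ polyDim Q by omega⟩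
    exact hxW <|
      mem_iUnion₂.2 ⟨(i, j), hK, left_mem_affineSpan_insert_of_lineMap_mem ⟨hi, hj⟩ ht.2.ne⟩
end

section
/- Let L be a finite distributive lattice, P its join-irreducible poset, and v_a ∈ ℝ^P the vertex of the order polytope corresponding to a ∈ L. Suppose tuples (a_1,...,a_k) and (b_1,...,b_k) of elements of L satisfy Σ v_{a_j} = Σ v_{b_j}. If for some parts O(P,<_1), O(P,<_2) of a polyhedral subdivision of O(P,<) into order polytopes, all v_{a_j} are vertices of O(P,<_1) and all v_{b_j} are vertices of O(P,<_2), then all v_{a_j} and all v_{b_j} lie in O(P,<_1) ∩ O(P,<_2). -/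
open Classical in
/-- The vertex of the order polytope associated with `a ∈ L`. -/
noncomputable def vtx {L : Type*} [Lattice L] (a : L) : JI L → ℝ :=
  fun p => if (p : L) ≤ a then 1 else 0

/-!
The barycentre `m` of the points `v_{a_j}` equals that of the points `v_{b_j}`, so it lies in
`O(P,<_1)` and in `O(P,<_2)` by convexity, i.e. in the common face `O(P,<_1) ∩ O(P,<_2)`.
A face containing a strictly positive convex combination of points of the polytope contains
all of these points.
-/

open Finset

theorem IsExtreme.mem_of_centerMass_mem {𝕜 E ι : Type*} [Field 𝕜] [LinearOrder 𝕜]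
    [IsStrictOrderedRing 𝕜] [AddCommGroup E] [Module 𝕜 E] {A B : Set E}
    (hA : Convex 𝕜 A) (hAB : IsExtreme 𝕜 A B) {t : Finset ι} {w : ι → 𝕜} {z : ι → E}
    (hw : ∀ i ∈ t, 0 < w i) (hz : ∀ i ∈ t, z i ∈ A) (hB : t.centerMass w z ∈ B) :
    ∀ i ∈ t, z i ∈ B := by
  classical
  induction t using Finset.induction with
  | empty => simp
  | insert i t hi ih =>
    rcases t.eq_empty_or_nonempty with rfl | ht
    · rw [insert_empty, centerMass_singleton _ _ (hw i (mem_singleton_self i)).ne'] at hB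
      simpa using hB
    have hwt : 0 < ∑ j ∈ t, w j := sum_pos (fun j hj => hw j (mem_insert_of_mem hj)) ht
    have hwi : 0 < w i := hw i (mem_insert_self i t)
    have hzt : t.centerMass w z ∈ A := hA.centerMass_mem
      (fun j hj => (hw j (mem_insert_of_mem hj)).le) hwt (fun j hj => hz j (mem_insert_of_mem hj))
    have hseg : (insert i t).centerMass w z ∈ openSegment 𝕜 (z i) (t.centerMass w z) := by
      rw [centerMass_insert _ _ _ hi hwt.ne']
      exact ⟨_, _, by positivity, by positivity, by field_simp, rfl⟩
    have hzi := hAB.left_mem_of_mem_openSegment (hz i (mem_insert_self i t)) hzt hB hseg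
    have hmt := hAB.right_mem_of_mem_openSegment (hz i (mem_insert_self i t)) hzt hB hseg
    rw [forall_mem_insert]
    exact ⟨hzi, ih (fun j hj => hw j (mem_insert_of_mem hj))
      (fun j hj => hz j (mem_insert_of_mem hj)) hmt⟩

theorem convex_orderPolytope {P : Type*} [Fintype P] (lt : P → P → Prop) :
    Convex ℝ (orderPolytope lt) := by
  intro x hx y hy s t hs ht hst
  refine ⟨fun p => convex_Icc (0 : ℝ) 1 (hx.1 p) (hy.1 p) hs ht hst, fun p q hpq => ?_⟩
  have hxpq := hx.2 p q hpq
  have hypq := hy.2 p q hpq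
  simp only [Pi.add_apply, Pi.smul_apply, smul_eq_mul]
  gcongr

theorem stmt15_general {L : Type*} [DistribLattice L] [Fintype L]
    [DecidablePred (SupIrred : L → Prop)]
    (lt1 lt2 : JI L → JI L → Prop)
    (hface1 : IsExtreme ℝ (orderPolytope lt1) (orderPolytope lt1 ∩ orderPolytope lt2))
    (hface2 : IsExtreme ℝ (orderPolytope lt2) (orderPolytope lt1 ∩ orderPolytope lt2))
    (k : ℕ) (a b : Fin k → L)
    (hsum : ∑ j, vtx (a j) = ∑ j, vtx (b j))
    (ha : ∀ j, vtx (a j) ∈ Set.extremePoints ℝ (orderPolytope lt1))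
    (hb : ∀ j, vtx (b j) ∈ Set.extremePoints ℝ (orderPolytope lt2)) :
    (∀ j, vtx (a j) ∈ orderPolytope lt1 ∩ orderPolytope lt2) ∧
    (∀ j, vtx (b j) ∈ orderPolytope lt1 ∩ orderPolytope lt2) := by
  rcases k.eq_zero_or_pos with rfl | hk
  · exact ⟨finZeroElim, finZeroElim⟩
  have hweight : (0 : ℝ) < ∑ _j : Fin k, (1 : ℝ) := by simpa using hk
  have hbary : univ.centerMass (fun _ => (1 : ℝ)) (fun j => vtx (a j)) =
      univ.centerMass (fun _ => (1 : ℝ)) (fun j => vtx (b j)) := by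
    simp only [centerMass, one_smul, hsum]
  have hmem : univ.centerMass (fun _ => (1 : ℝ)) (fun j => vtx (a j)) ∈
      orderPolytope lt1 ∩ orderPolytope lt2 := by
    refine ⟨(convex_orderPolytope lt1).centerMass_mem (by simp) hweight
      (fun j _ => (ha j).1), ?_⟩
    rw [hbary]
    exact (convex_orderPolytope lt2).centerMass_mem (by simp) hweight (fun j _ => (hb j).1)
  exact ⟨fun j => hface1.mem_of_centerMass_mem (convex_orderPolytope lt1) (by simp)
      (fun j _ => (ha j).1) hmem j (mem_univ j),
    fun j => hface2.mem_of_centerMass_mem (convex_orderPolytope lt2) (by simp)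
      (fun j _ => (hb j).1) (hbary ▸ hmem) j (mem_univ j)⟩

/-- If tuples `(a_1,…,a_k)`, `(b_1,…,b_k)` in `L` satisfy `Σ v_{a_j} = Σ v_{b_j}`, all
`v_{a_j}` are vertices of a part `O(P,<_1)` and all `v_{b_j}` are vertices of a part
`O(P,<_2)` of a polyhedral subdivision of `O(P,<)` into order polytopes, then all these
points lie in `O(P,<_1) ∩ O(P,<_2)`. -/
theorem stmt15 {L : Type*} [DistribLattice L] [Fintype L] [OrderBot L]
    [DecidablePred (SupIrred : L → Prop)]
    (lt1 lt2 : JI L → JI L → Prop)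
    (h1 : IsStrictOrder (JI L) lt1) (h2 : IsStrictOrder (JI L) lt2)
    (hs1 : ∀ p q : JI L, p < q → lt1 p q) (hs2 : ∀ p q : JI L, p < q → lt2 p q)
    (hface1 : IsExtreme ℝ (orderPolytope lt1) (orderPolytope lt1 ∩ orderPolytope lt2))
    (hface2 : IsExtreme ℝ (orderPolytope lt2) (orderPolytope lt1 ∩ orderPolytope lt2))
    (k : ℕ) (a b : Fin k → L)
    (hsum : ∑ j, vtx (a j) = ∑ j, vtx (b j))
    (ha : ∀ j, vtx (a j) ∈ Set.extremePoints ℝ (orderPolytope lt1))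
    (hb : ∀ j, vtx (b j) ∈ Set.extremePoints ℝ (orderPolytope lt2)) :
    (∀ j, vtx (a j) ∈ orderPolytope lt1 ∩ orderPolytope lt2) ∧
    (∀ j, vtx (b j) ∈ orderPolytope lt1 ∩ orderPolytope lt2) :=
  stmt15_general lt1 lt2 hface1 hface2 k a b hsum ha hb
end

section
/- Let L be a finite distributive lattice with join-irreducible poset P and v_a ∈ ℝ^P the vertex of O(P,<) corresponding to a ∈ L. For any x in the l-fold Minkowski sum of the vertex set {v_a : a ∈ L} with itself, there exist elements a_1 ≤ ... ≤ a_l in L (a weak chain) with x = v_{a_1} + ... + v_{a_l}. -/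
open Finset in
/-- Any point of the `l`-fold Minkowski sum of the vertex set `{v_a : a ∈ L}` with
itself can be written as `v_{a_1} + ⋯ + v_{a_l}` with `a_1 ≤ … ≤ a_l` a weak chain. -/
theorem stmt16 {L : Type*} [DistribLattice L] [Fintype L] [OrderBot L]
    (l : ℕ) (a : Fin l → L) :
    ∃ b : Fin l → L, Monotone b ∧ ∑ j, vtx (b j) = ∑ j, vtx (a j) := by
  classical
  -- the "elementary symmetric" elements
  set g : Finset (Fin l) → L := fun S => if h : S.Nonempty then S.inf' h a else ⊥ with hg
  set b : Fin l → L := fun i =>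
    ((Finset.univ : Finset (Fin l)).powersetCard (l - i.val)).sup g with hb
  have hgle : ∀ (S T : Finset (Fin l)), T ⊆ S → T.Nonempty → g S ≤ g T := by
    intro S T hTS hT
    have hS : S.Nonempty := hT.mono hTS
    simp only [hg, dif_pos hS, dif_pos hT]
    exact Finset.inf'_mono a hTS hT
  have hmono : Monotone b := by
    intro i i' hii'
    apply Finset.sup_le
    intro S hS
    rw [Finset.mem_powersetCard] at hS
    have h1 : l - i'.val ≤ S.card := by
      rw [hS.2]; exact Nat.sub_le_sub_left hii' l
    obtain ⟨T, hTS, hT⟩ := Finset.exists_subset_card_eq h1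
    have hTne : T.Nonempty := by
      rw [← Finset.card_pos, hT]
      have := i'.isLt; omega
    calc g S ≤ g T := hgle S T hTS hTne
      _ ≤ b i' := Finset.le_sup (by
            rw [Finset.mem_powersetCard]
            exact ⟨Finset.subset_univ _, hT⟩)
  refine ⟨b, hmono, ?_⟩
  funext p
  have hp : SupPrime (p : L) := supPrime_iff_supIrred.2 p.2
  set k := (Finset.univ.filter fun j : Fin l => (p : L) ≤ a j).card with hk
  have hkl : k ≤ l := by
    calc k ≤ (Finset.univ : Finset (Fin l)).card := Finset.card_filter_le _ _
      _ = l := Finset.card_univ.trans (Fintype.card_fin l)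
  -- key characterization
  have key : ∀ i : Fin l, (p : L) ≤ b i ↔ l - i.val ≤ k := by
    intro i
    constructor
    · intro h
      rw [hb] at h
      obtain ⟨S, hS, hpS⟩ := (hp.le_finset_sup).1 h
      rw [Finset.mem_powersetCard] at hS
      have hSne : S.Nonempty := by
        rw [← Finset.card_pos, hS.2]; have := i.isLt; omega
      rw [hg] at hpS; simp only [dif_pos hSne] at hpS
      rw [Finset.le_inf'_iff] at hpS
      have : S ⊆ Finset.univ.filter fun j : Fin l => (p : L) ≤ a j := by
        intro j hj
        exact Finset.mem_filter.2 ⟨Finset.mem_univ j, hpS j hj⟩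
      calc l - i.val = S.card := hS.2.symm
        _ ≤ k := Finset.card_le_card this
    · intro h
      obtain ⟨T, hTsub, hT⟩ := Finset.exists_subset_card_eq (hk ▸ h)
      have hTne : T.Nonempty := by
        rw [← Finset.card_pos, hT]; have := i.isLt; omega
      have : (p : L) ≤ g T := by
        rw [hg]; simp only [dif_pos hTne]
        apply Finset.le_inf'
        intro j hj
        exact (Finset.mem_filter.1 (hTsub hj)).2
      exact this.trans (Finset.le_sup (by
        rw [Finset.mem_powersetCard]; exact ⟨Finset.subset_univ _, hT⟩))
  -- now compute the sums
  have lhs : (∑ j, vtx (b j)) p = ∑ j : Fin l, (if l - j.val ≤ k then (1:ℝ) else 0) := by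
    rw [Finset.sum_apply]
    refine Finset.sum_congr rfl fun j _ => ?_
    simp only [vtx, key j]
  have rhs : (∑ j, vtx (a j)) p = (k : ℝ) := by
    rw [Finset.sum_apply]
    simp only [vtx]
    rw [Finset.sum_boole, hk]
  rw [lhs, rhs]
  rw [Finset.sum_boole]
  have : (Finset.univ.filter fun j : Fin l => l - j.val ≤ k) =
      Finset.univ.filter fun j : Fin l => l - k ≤ j.val := by
    ext j; simp only [Finset.mem_filter, Finset.mem_univ, true_and]
    have := j.isLt; omega
  rw [this]
  have hcard : (Finset.univ.filter fun j : Fin l => l - k ≤ j.val).card = k := by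
    have himg : (Finset.univ.filter fun j : Fin l => l - k ≤ j.val).image Fin.val
        = Finset.Ico (l - k) l := by
      ext n
      simp only [Finset.mem_image, Finset.mem_filter, Finset.mem_univ, true_and,
        Finset.mem_Ico]
      constructor
      · rintro ⟨j, hj, rfl⟩; exact ⟨hj, j.isLt⟩
      · rintro ⟨h1, h2⟩; exact ⟨⟨n, h2⟩, h1, rfl⟩
    have := Finset.card_image_of_injective
      (Finset.univ.filter fun j : Fin l => l - k ≤ j.val) Fin.val_injective
    rw [himg, Nat.card_Ico] at this
    omega
  rw [hcard]
end

section
/- For a polynomial ring R over ℂ, the set U(I) of weight vectors w ∈ ℝ^N such that the ideal I ⊆ R = ℂ[X_1,...,X_N] is homogeneous with respect to the grading grad_w(X_i) = w_i is a linear subspace of ℝ^N. -/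
open Classical in
/-- The `grad_w`-homogeneous component of grading `c` of a polynomial `p`: the sum of
the terms of `p` supported on monomials `X^d` with `(w, d) = c`. -/
noncomputable def wComponent {N : ℕ} (w : Fin N → ℝ) (c : ℝ)
    (p : MvPolynomial (Fin N) ℂ) : MvPolynomial (Fin N) ℂ :=
  ∑ d ∈ p.support,
    if (∑ i, w i * (d i : ℝ)) = c then MvPolynomial.monomial d (MvPolynomial.coeff d p)
    else 0

open MvPolynomial in
lemma coeff_wComponent {N : ℕ} (w : Fin N → ℝ) (c : ℝ) (p : MvPolynomial (Fin N) ℂ)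
    (e : Fin N →₀ ℕ) :
    (wComponent w c p).coeff e =
      if (∑ i, w i * (e i : ℝ)) = c then p.coeff e else 0 := by
  classical
  unfold wComponent
  rw [MvPolynomial.coeff_sum]
  by_cases he : e ∈ p.support
  · rw [Finset.sum_eq_single e ?h1 (fun h => absurd he h)]
    · simp [coeff_monomial, apply_ite (coeff e)]
    · intro d _ hne
      simp [coeff_monomial, apply_ite (coeff e), hne]
  · rw [MvPolynomial.notMem_support_iff] at he
    rw [he, ite_self, Finset.sum_eq_zero]
    intro d hd
    have hne : d ≠ e := by
      intro h; subst h
      exact (MvPolynomial.mem_support_iff.mp hd) he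
    simp [coeff_monomial, apply_ite (coeff e), hne]

/-- The set `U(I)` of weight vectors `w ∈ ℝ^N` such that the ideal
`I ⊆ ℂ[X_1,…,X_N]` is homogeneous for the grading `grad_w (X_i) = w_i`
is a linear subspace of `ℝ^N`. -/
theorem stmt18 (N : ℕ) (I : Ideal (MvPolynomial (Fin N) ℂ)) :
    ∃ S : Submodule ℝ (Fin N → ℝ),
      (S : Set (Fin N → ℝ)) = {w | ∀ p ∈ I, ∀ c : ℝ, wComponent w c p ∈ I} := by
  classical
  have hzero : ∀ p ∈ I, ∀ c : ℝ, wComponent (0 : Fin N → ℝ) c p ∈ I := by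
    intro p hp c
    have : wComponent (0 : Fin N → ℝ) c p = if (0 : ℝ) = c then p else 0 := by
      apply MvPolynomial.ext
      intro e
      rw [coeff_wComponent]
      simp [apply_ite (MvPolynomial.coeff e)]
    rw [this]
    split_ifs
    · exact hp
    · exact I.zero_mem
  have hsmul : ∀ (a : ℝ) (w : Fin N → ℝ),
      (∀ p ∈ I, ∀ c : ℝ, wComponent w c p ∈ I) →
      ∀ p ∈ I, ∀ c : ℝ, wComponent (a • w) c p ∈ I := by
    intro a w hw p hp c
    by_cases ha : a = 0
    · subst ha
      simpa using hzero p hp c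
    · have : wComponent (a • w) c p = wComponent w (a⁻¹ * c) p := by
        apply MvPolynomial.ext
        intro e
        rw [coeff_wComponent, coeff_wComponent]
        have h1 : (∑ i, (a • w) i * (e i : ℝ)) = a * ∑ i, w i * (e i : ℝ) := by
          rw [Finset.mul_sum]
          refine Finset.sum_congr rfl fun i _ => by
            simp [Pi.smul_apply, smul_eq_mul, mul_assoc]
        rw [h1]
        congr 1
        refine propext ⟨fun h => ?_, fun h => ?_⟩
        · rw [← h]; exact (inv_mul_cancel_left₀ ha _).symm
        · rw [h]; exact mul_inv_cancel_left₀ ha _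
      rw [this]
      exact hw p hp _
  have hadd : ∀ (w₁ w₂ : Fin N → ℝ),
      (∀ p ∈ I, ∀ c : ℝ, wComponent w₁ c p ∈ I) →
      (∀ p ∈ I, ∀ c : ℝ, wComponent w₂ c p ∈ I) →
      ∀ p ∈ I, ∀ c : ℝ, wComponent (w₁ + w₂) c p ∈ I := by
    intro w₁ w₂ h₁ h₂ p hp c
    have key : wComponent (w₁ + w₂) c p =
        ∑ c₁ ∈ p.support.image (fun d => ∑ i, w₁ i * (d i : ℝ)),
          wComponent w₂ (c - c₁) (wComponent w₁ c₁ p) := by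
      apply MvPolynomial.ext
      intro e
      rw [coeff_wComponent, MvPolynomial.coeff_sum]
      simp only [coeff_wComponent]
      have hsum : (∑ i, (w₁ + w₂) i * (e i : ℝ)) =
          (∑ i, w₁ i * (e i : ℝ)) + ∑ i, w₂ i * (e i : ℝ) := by
        rw [← Finset.sum_add_distrib]
        exact Finset.sum_congr rfl fun i _ => by simp [add_mul]
      rw [hsum]
      set g₁ := ∑ i, w₁ i * (e i : ℝ) with hg₁
      set g₂ := ∑ i, w₂ i * (e i : ℝ) with hg₂
      by_cases he : e ∈ p.support
      · have hmem : g₁ ∈ p.support.image (fun d => ∑ i, w₁ i * (d i : ℝ)) :=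
          Finset.mem_image.mpr ⟨e, he, rfl⟩
        rw [Finset.sum_eq_single g₁ ?h2 (fun h => absurd hmem h)]
        · simp only [if_pos rfl]
          congr 1
          refine propext ⟨fun h => ?_, fun h => ?_⟩
          · rw [eq_sub_iff_add_eq]; linarith
          · rw [eq_sub_iff_add_eq] at h; linarith
        · intro c₁ _ hne
          simp [Ne.symm hne]
      · have h0 : p.coeff e = 0 := MvPolynomial.notMem_support_iff.mp he
        rw [h0]
        rw [ite_self, Finset.sum_eq_zero]
        intro c₁ _
        simp
    rw [key]
    exact Ideal.sum_mem _ fun c₁ _ => h₂ _ (h₁ p hp c₁) _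
  refine ⟨{ carrier := {w | ∀ p ∈ I, ∀ c : ℝ, wComponent w c p ∈ I},
            zero_mem' := hzero,
            add_mem' := fun {w₁ w₂} hw₁ hw₂ => hadd w₁ w₂ hw₁ hw₂,
            smul_mem' := fun a w hw => hsmul a w hw }, rfl⟩
end

section
/- Let (P̃, <̃) be the poset with elements p_{r,s} for 1 ≤ r ≤ s ≤ n, (r,s) ∉ {(1,1),(n,n)}, ordered by p_{r,s} ≤ p_{u,v} iff r ≤ u and s ≤ v. The map sending a_{i_1,...,i_k} (with 1 ≤ i_1 < ... < i_k ≤ n, 1 ≤ k ≤ n−1) to the set containing p_{1,n−j+1},...,p_{i_j−j, n−j+1} for each j ∈ [1,k] together with all p_{r,s} with s < n−k+1 is a lattice isomorphism from the lattice L of all such a_{i_1,...,i_k} onto the lattice of order ideals of (P̃, <̃). -/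
/-- The poset `P̃` with elements `p_{r,s}`, `1 ≤ r ≤ s ≤ n`, `(r,s) ∉ {(1,1),(n,n)}`. -/
def GTPoset (n : ℕ) :=
  {rs : ℕ × ℕ // 1 ≤ rs.1 ∧ rs.1 ≤ rs.2 ∧ rs.2 ≤ n ∧ rs ≠ (1, 1) ∧ rs ≠ (n, n)}

/-- The order on `P̃`: `p_{r,s} ≤ p_{u,v}` iff `r ≤ u` and `s ≤ v`. -/
def GTle {n : ℕ} (p q : GTPoset n) : Prop := p.1.1 ≤ q.1.1 ∧ p.1.2 ≤ q.1.2

/-- An element `a_{i_1,…,i_k}` of the lattice `L`: `1 ≤ k ≤ n − 1` and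
`1 ≤ i_1 < ⋯ < i_k ≤ n`. -/
structure GTElem (n : ℕ) where
  k : ℕ
  hk1 : 1 ≤ k
  hk2 : k ≤ n - 1
  idx : Fin k → ℕ
  mono : StrictMono idx
  lower : ∀ j, 1 ≤ idx j
  upper : ∀ j, idx j ≤ n

/-- The order on `L`: `a_{i_1,…,i_k} ≤ a_{i'_1,…,i'_l}` iff `k ≥ l` and `i_j ≤ i'_j`
for `j ∈ [1,l]`. -/
def GTElem.le {n : ℕ} (a b : GTElem n) : Prop :=
  ∃ h : b.k ≤ a.k, ∀ j : Fin b.k, a.idx ⟨j.1, lt_of_lt_of_le j.2 h⟩ ≤ b.idx j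

/-- The map `φ` sending `a_{i_1,…,i_k}` to the set containing
`p_{1,n−j+1}, …, p_{i_j−j, n−j+1}` for each `j ∈ [1,k]` together with all `p_{r,s}`
with `s < n − k + 1`.  (Here `j = j₀ + 1` for `j₀ : Fin k`, the condition
`r ≤ i_j − j` is written `r + j ≤ i_j`, and `s < n − k + 1` as `s + k < n + 1`.) -/
def gtMap {n : ℕ} (a : GTElem n) : Set (GTPoset n) :=
  {p | (∃ j : Fin a.k, p.1.2 = n - (j.1 + 1) + 1 ∧ p.1.1 + (j.1 + 1) ≤ a.idx j) ∨
       p.1.2 + a.k < n + 1}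

/-- `J` is an order ideal (lower set) of `P̃`. -/
def gtIsIdeal {n : ℕ} (J : Set (GTPoset n)) : Prop :=
  ∀ ⦃p q : GTPoset n⦄, p ∈ J → GTle q p → q ∈ J

/- ------------------ auxiliary material ------------------ -/

/-- Numeric facts about an element of `P̃`. -/
lemma GTfacts {n : ℕ} (p : GTPoset n) :
    1 ≤ p.1.1 ∧ p.1.1 ≤ p.1.2 ∧ p.1.2 ≤ n ∧ 2 ≤ p.1.2 ∧ ¬(p.1.1 = n ∧ p.1.2 = n) := by
  obtain ⟨⟨r, s⟩, h1, h2, h3, h4, h5⟩ := p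
  simp only [ne_eq, Prod.mk.injEq] at h4 h5
  show 1 ≤ r ∧ r ≤ s ∧ s ≤ n ∧ 2 ≤ s ∧ ¬(r = n ∧ s = n)
  refine ⟨h1, h2, h3, ?_, ?_⟩ <;> omega

/-- Constructor for elements of `P̃` from numeric hypotheses. -/
def mkP (n r s : ℕ) (h1 : 1 ≤ r) (h2 : r ≤ s) (h3 : s ≤ n) (h4 : 2 ≤ s) (h5 : r < n) :
    GTPoset n :=
  ⟨(r, s), h1, h2, h3,
    by simp only [ne_eq, Prod.mk.injEq, not_and]; omega,
    by simp only [ne_eq, Prod.mk.injEq, not_and]; omega⟩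

/-- Gap estimate for strictly monotone functions on `Fin k`. -/
lemma sm_gap {k : ℕ} {f : Fin k → ℕ} (hf : StrictMono f) :
    ∀ (d : ℕ) (i j : Fin k), j.1 = i.1 + d → f i + d ≤ f j := by
  intro d
  induction d with
  | zero =>
    intro i j h
    have : i = j := Fin.ext (by omega)
    simp [this]
  | succ d ih =>
    intro i j h
    have hj' : i.1 + d < k := by omega
    have h1 := ih i ⟨i.1 + d, hj'⟩ rfl
    have h2 : f ⟨i.1 + d, hj'⟩ < f j := hf (by rw [Fin.lt_def]; simpa using by omega)
    omega

/-- Lower bound for strictly monotone functions on `Fin k` with values `≥ 1`. -/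
lemma sm_lb {k : ℕ} {f : Fin k → ℕ} (hf : StrictMono f) (hl : ∀ j, 1 ≤ f j)
    (j : Fin k) : j.1 + 1 ≤ f j := by
  have h0 : (0 : ℕ) < k := lt_of_le_of_lt (Nat.zero_le _) j.2
  have h1 := sm_gap hf j.1 ⟨0, h0⟩ j (by simp)
  have h2 := hl ⟨0, h0⟩
  omega

/-- `(r,s)` lies in `J` (as a pair of numbers). -/
def Jmem {n : ℕ} (J : Set (GTPoset n)) (r s : ℕ) : Prop :=
  ∃ p : GTPoset n, p ∈ J ∧ p.1 = (r, s)

lemma Jmem_facts {n : ℕ} {J : Set (GTPoset n)} {r s : ℕ} (h : Jmem J r s) :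
    1 ≤ r ∧ r ≤ s ∧ s ≤ n ∧ 2 ≤ s ∧ ¬(r = n ∧ s = n) := by
  obtain ⟨p, _, he⟩ := h
  have hf := GTfacts p
  rw [he] at hf
  simpa using hf

lemma Jmem_elim {n : ℕ} {J : Set (GTPoset n)} {p : GTPoset n}
    (h : Jmem J p.1.1 p.1.2) : p ∈ J := by
  obtain ⟨q, hq, he⟩ := h
  have : q = p := Subtype.ext he
  rwa [this] at hq

lemma Jmem_down {n : ℕ} {J : Set (GTPoset n)} (hJ : gtIsIdeal J) {r s r' s' : ℕ}
    (h : Jmem J r s) (h1 : 1 ≤ r') (h2 : r' ≤ r) (h3 : r' ≤ s') (h4 : s' ≤ s)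
    (h5 : 2 ≤ s') (h6 : r' < n) : Jmem J r' s' := by
  obtain ⟨p, hp, he⟩ := h
  have hsn : s' ≤ n := le_trans h4 (Jmem_facts ⟨p, hp, he⟩).2.2.1
  refine ⟨mkP n r' s' h1 h3 hsn h5 h6, hJ hp ⟨?_, ?_⟩, rfl⟩
  · show r' ≤ p.1.1
    rw [he]; exact h2
  · show s' ≤ p.1.2
    rw [he]; exact h4

/-- The largest `r` with `(r, n - j0) ∈ J` (0 if none). -/
noncomputable def rowc {n : ℕ} (J : Set (GTPoset n)) (j0 : ℕ) : ℕ :=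
  @Nat.findGreatest (fun r => Jmem J r (n - j0)) (Classical.decPred _) n

lemma le_rowc {n : ℕ} {J : Set (GTPoset n)} {j0 r : ℕ} (h : Jmem J r (n - j0)) :
    r ≤ rowc J j0 := by
  have hf := Jmem_facts h
  exact @Nat.le_findGreatest r (fun r => Jmem J r (n - j0)) (Classical.decPred _) n
    (by omega) h

lemma rowc_mem {n : ℕ} {J : Set (GTPoset n)} {j0 : ℕ} (h : 0 < rowc J j0) :
    Jmem J (rowc J j0) (n - j0) :=
  @Nat.findGreatest_of_ne_zero _ (fun r => Jmem J r (n - j0)) (Classical.decPred _) n rfl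
    (by omega)

/- ------------------ the theorem ------------------ -/

/-- The map `φ` is a lattice isomorphism from `L` onto the lattice of order ideals of
`(P̃, <̃)`: every `φ(a)` is an order ideal, `φ` is an order embedding
(`a ≤ b ↔ φ(a) ⊆ φ(b)`, hence injective and meet/join preserving), and every order
ideal of `P̃` is of the form `φ(a)`. -/
theorem stmt19 (n : ℕ) (hn : 2 ≤ n) :
    (∀ a : GTElem n, gtIsIdeal (gtMap a)) ∧
    (∀ a b : GTElem n, GTElem.le a b ↔ gtMap a ⊆ gtMap b) ∧
    (∀ J : Set (GTPoset n), gtIsIdeal J → ∃ a : GTElem n, gtMap a = J) := by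
  refine ⟨?_, ?_, ?_⟩
  · -- Part 1: each φ(a) is an order ideal
    intro a p q hp hqp
    obtain ⟨hr, hs⟩ := hqp
    obtain ⟨hq1, hq2, hq3, hq4, hq5⟩ := GTfacts q
    have hak2 := a.hk2
    have hp' : (∃ j : Fin a.k, p.1.2 = n - (j.1 + 1) + 1 ∧ p.1.1 + (j.1 + 1) ≤ a.idx j) ∨
        p.1.2 + a.k < n + 1 := hp
    show (∃ j : Fin a.k, q.1.2 = n - (j.1 + 1) + 1 ∧ q.1.1 + (j.1 + 1) ≤ a.idx j) ∨
        q.1.2 + a.k < n + 1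
    rcases hp' with ⟨j, hs1, hr1⟩ | h2
    · by_cases hq : q.1.2 + a.k < n + 1
      · exact Or.inr hq
      · push_neg at hq
        have hjk : j.1 + 1 ≤ a.k := j.2
        have hjle : j.1 ≤ n - q.1.2 := by omega
        have hjlt : n - q.1.2 < a.k := by omega
        have hgap := sm_gap a.mono (n - q.1.2 - j.1) j ⟨n - q.1.2, hjlt⟩
          (show n - q.1.2 = j.1 + (n - q.1.2 - j.1) by omega)
        refine Or.inl ⟨⟨n - q.1.2, hjlt⟩, ?_, ?_⟩
        · show q.1.2 = n - (n - q.1.2 + 1) + 1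
          omega
        · show q.1.1 + (n - q.1.2 + 1) ≤ a.idx ⟨n - q.1.2, hjlt⟩
          omega
    · exact Or.inr (by omega)
  · -- Part 2: φ is an order embedding
    intro a b
    have hak1 := a.hk1
    have hak2 := a.hk2
    have hbk1 := b.hk1
    have hbk2 := b.hk2
    constructor
    · rintro ⟨hk, hle⟩ p hp
      obtain ⟨hp1, hp2, hp3, hp4, hp5⟩ := GTfacts p
      have hp' : (∃ j : Fin a.k, p.1.2 = n - (j.1 + 1) + 1 ∧ p.1.1 + (j.1 + 1) ≤ a.idx j) ∨
          p.1.2 + a.k < n + 1 := hp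
      show (∃ j : Fin b.k, p.1.2 = n - (j.1 + 1) + 1 ∧ p.1.1 + (j.1 + 1) ≤ b.idx j) ∨
          p.1.2 + b.k < n + 1
      rcases hp' with ⟨j, hs1, hr1⟩ | h2
      · by_cases hjb : j.1 < b.k
        · refine Or.inl ⟨⟨j.1, hjb⟩, hs1, ?_⟩
          exact le_trans hr1 (hle ⟨j.1, hjb⟩)
        · have hjk : j.1 + 1 ≤ a.k := j.2
          exact Or.inr (by omega)
      · exact Or.inr (by omega)
    · intro hsub
      have hkle : b.k ≤ a.k := by
        by_contra hc
        push_neg at hc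
        have hp : mkP n (n - a.k) (n - a.k) (by omega) (le_refl _) (by omega)
            (by omega) (by omega) ∈ gtMap a := Or.inr (show n - a.k + a.k < n + 1 by omega)
        have hpb := hsub hp
        have hpb' : (∃ j : Fin b.k, n - a.k = n - (j.1 + 1) + 1 ∧
            n - a.k + (j.1 + 1) ≤ b.idx j) ∨ n - a.k + b.k < n + 1 := hpb
        rcases hpb' with ⟨j, hs1, hr1⟩ | h2
        · have hjk : j.1 + 1 ≤ b.k := j.2
          have hup := b.upper j
          omega
        · omega
      refine ⟨hkle, ?_⟩
      intro j
      have hja : j.1 < a.k := lt_of_lt_of_le j.2 hkle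
      have hjk : j.1 + 1 ≤ b.k := j.2
      show a.idx ⟨j.1, hja⟩ ≤ b.idx j
      by_cases hsm : a.idx ⟨j.1, hja⟩ ≤ j.1 + 1
      · exact le_trans hsm (sm_lb b.mono b.lower j)
      · push_neg at hsm
        have hup := a.upper ⟨j.1, hja⟩
        have hp : mkP n (a.idx ⟨j.1, hja⟩ - (j.1 + 1)) (n - j.1) (by omega) (by omega)
            (by omega) (by omega) (by omega) ∈ gtMap a :=
          Or.inl ⟨⟨j.1, hja⟩, show n - j.1 = n - (j.1 + 1) + 1 by omega,
            show a.idx ⟨j.1, hja⟩ - (j.1 + 1) + (j.1 + 1) ≤ a.idx ⟨j.1, hja⟩ by omega⟩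
        have hpb := hsub hp
        have hpb' : (∃ j' : Fin b.k, n - j.1 = n - (j'.1 + 1) + 1 ∧
            a.idx ⟨j.1, hja⟩ - (j.1 + 1) + (j'.1 + 1) ≤ b.idx j') ∨
            n - j.1 + b.k < n + 1 := hpb
        rcases hpb' with ⟨j', hs1, hr1⟩ | h2
        · have hj'k : j'.1 + 1 ≤ b.k := j'.2
          have hjj : j' = j := Fin.ext (by omega)
          rw [hjj] at hr1
          omega
        · omega
  · -- Part 3: surjectivity
    intro J hJ
    classical
    -- find the cut-off k
    obtain ⟨k, hk1, hk2, hmin, hfull⟩ :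
        ∃ k, 1 ≤ k ∧ k ≤ n - 1 ∧
          (∀ j0, 1 ≤ j0 → j0 < k → ¬ Jmem J (n - j0) (n - j0)) ∧
          (∀ j0, k ≤ j0 → j0 + 2 ≤ n → Jmem J (n - j0) (n - j0)) := by
      by_cases hex : ∃ j0, 1 ≤ j0 ∧ j0 + 2 ≤ n ∧ Jmem J (n - j0) (n - j0)
      · obtain ⟨h1, h2, h3⟩ := Nat.find_spec hex
        refine ⟨Nat.find hex, h1, by omega, ?_, ?_⟩
        · intro j0 hj1 hj2 hmem
          exact Nat.find_min hex hj2 ⟨hj1, by omega, hmem⟩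
        · intro j0 hj0 hj0n
          have key : ∀ m, Nat.find hex + m + 2 ≤ n →
              Jmem J (n - (Nat.find hex + m)) (n - (Nat.find hex + m)) := by
            intro m
            induction m with
            | zero => intro _; simpa using h3
            | succ m ih =>
              intro hm
              have hprev := ih (by omega)
              have hres : Jmem J (n - (Nat.find hex + m + 1)) (n - (Nat.find hex + m + 1)) :=
                Jmem_down hJ hprev (by omega) (by omega) (by omega) (by omega) (by omega)
                  (by omega)
              rwa [show Nat.find hex + (m + 1) = Nat.find hex + m + 1 by omega]
          have := key (j0 - Nat.find hex) (by omega)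
          rwa [show Nat.find hex + (j0 - Nat.find hex) = j0 by omega] at this
      · push_neg at hex
        refine ⟨n - 1, by omega, le_refl _, ?_, ?_⟩
        · intro j0 h1 h2 hmem
          exact (hex j0 h1 (by omega)) hmem
        · intro j0 h1 h2
          exact absurd h1 (by omega)
    -- bounds on rowc
    have hbound : ∀ j0, j0 < k → rowc J j0 + j0 + 1 ≤ n := by
      intro j0 hj0
      rcases Nat.eq_zero_or_pos (rowc J j0) with h0 | hpos
      · omega
      · have hm := rowc_mem hpos
        have hf := Jmem_facts hm
        by_cases hj00 : j0 = 0
        · subst hj00; omega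
        · have hne : rowc J j0 ≠ n - j0 := fun he => hmin j0 (by omega) hj0 (he ▸ hm)
          omega
    have hstep : ∀ j0, j0 + 1 < k → rowc J j0 ≤ rowc J (j0 + 1) := by
      intro j0 h
      rcases Nat.eq_zero_or_pos (rowc J j0) with h0 | hpos
      · omega
      · have hm := rowc_mem hpos
        have hb := hbound j0 (by omega)
        exact le_rowc (Jmem_down hJ hm hpos (le_refl _) (by omega) (by omega)
          (by omega) (by omega))
    have hmono : ∀ d i, i + d < k → rowc J i ≤ rowc J (i + d) := by
      intro d
      induction d with
      | zero => intro i _; simp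
      | succ d ih =>
        intro i h
        have h1 := ih i (by omega)
        have h2 := hstep (i + d) (by omega)
        rw [show i + (d + 1) = i + d + 1 by omega]
        omega
    refine ⟨⟨k, hk1, hk2, fun j => rowc J j.1 + j.1 + 1, ?_, ?_, ?_⟩, ?_⟩
    · -- StrictMono
      intro i j hij
      have hij' : i.1 < j.1 := hij
      show rowc J i.1 + i.1 + 1 < rowc J j.1 + j.1 + 1
      have := hmono (j.1 - i.1) i.1 (by omega)
      rw [show i.1 + (j.1 - i.1) = j.1 by omega] at this
      omega
    · -- lower
      intro j
      show 1 ≤ rowc J j.1 + j.1 + 1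
      omega
    · -- upper
      intro j
      show rowc J j.1 + j.1 + 1 ≤ n
      exact hbound j.1 j.2
    · -- gtMap = J
      ext p
      obtain ⟨⟨r, s⟩, hv⟩ := p
      have hfp : 1 ≤ r ∧ r ≤ s ∧ s ≤ n ∧ 2 ≤ s ∧ ¬(r = n ∧ s = n) :=
        GTfacts ⟨(r, s), hv⟩
      obtain ⟨h1, h2, h3, h4, h5⟩ := hfp
      by_cases hcase : n - s < k
      · constructor
        · intro hp
          have hp' : (∃ j : Fin k, s = n - (j.1 + 1) + 1 ∧
              r + (j.1 + 1) ≤ rowc J j.1 + j.1 + 1) ∨ s + k < n + 1 := hp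
          rcases hp' with ⟨j, hs1, hr1⟩ | h2'
          · have hjk : j.1 + 1 ≤ k := j.2
            have hj : j.1 = n - s := by omega
            rw [hj] at hr1
            have hmem : Jmem J (rowc J (n - s)) (n - (n - s)) := rowc_mem (by omega)
            apply Jmem_elim (p := ⟨(r, s), hv⟩)
            show Jmem J r s
            have hres : Jmem J r s := Jmem_down hJ hmem (by omega) (by omega)
              (by omega) (by omega) (by omega) (by omega)
            exact hres
          · exact absurd h2' (by omega)
        · intro hp
          show (∃ j : Fin k, s = n - (j.1 + 1) + 1 ∧
              r + (j.1 + 1) ≤ rowc J j.1 + j.1 + 1) ∨ s + k < n + 1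
          left
          refine ⟨⟨n - s, hcase⟩, ?_, ?_⟩
          · show s = n - (n - s + 1) + 1
            omega
          show r + (n - s + 1) ≤ rowc J (n - s) + (n - s) + 1
          have hmem : Jmem J r (n - (n - s)) :=
            ⟨⟨(r, s), hv⟩, hp, by rw [show n - (n - s) = s by omega]⟩
          have := le_rowc hmem
          omega
      · constructor
        · intro _
          apply Jmem_elim (p := ⟨(r, s), hv⟩)
          show Jmem J r s
          have hfl := hfull (n - s) (by omega) (by omega)
          exact Jmem_down hJ hfl (by omega) (by omega) (by omega) (by omega)
            (by omega) (by omega)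
        · intro _
          show (∃ j : Fin k, s = n - (j.1 + 1) + 1 ∧
              r + (j.1 + 1) ≤ rowc J j.1 + j.1 + 1) ∨ s + k < n + 1
          exact Or.inr (by omega)
end
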